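/- arXiv:2004.01442 — 8 statements merged into one kernel-verified Lean document; each statement's English description precedes it below -/
import Mathlib

section
/- Let T_1, ..., T_M be operators on ℝ^d, each α-averaged for some α ∈ (0,1], let λ ∈ (0, 1/α), let H ≥ 1 be an integer, and set 𝒯̃_λ = (1/M) Σ_{i=1}^M (λT_i + (1−λ)Id)^H and ζ = Hαλ / (1 + (H−1)αλ). Let x† be a fixed point of 𝒯̃_λ and let (y_n) be the sequence defined by y_{n+1} = 𝒯̃_λ(y_n) from an arbitrary initial point y_0 ∈ ℝ^d. Then for every n ∈ ℕ, ‖y_{n+1} − x†‖² ≤ ‖y_n − x†‖² − ((1−ζ)/ζ) ‖y_{n+1} − y_n‖². -/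
/-!
If `U = θ • T' + (1 - θ) • id` with `T'` nonexpansive, then
`‖U x - U y‖² + β ‖(x - U x) - (y - U y)‖² ≤ ‖x - y‖²` with `β = (1 - θ) / θ`.
Under composition these constants combine like resistors in parallel, `β₁ β₂ / (β₁ + β₂)`,
so the `H`-fold iterate satisfies the inequality with `β / H`; by convexity of `‖·‖²` it survives
averaging. With `θ = αλ` one checks `(1 - θ) / (θ H) = (1 - ζ) / ζ`, and evaluating the inequality
at the fixed point `x†` gives the Fejér estimate.
-/

open Finset Function

section AveragedIneq

variable {E : Type*} [NormedAddCommGroup E]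

def AveragedIneq (β : ℝ) (T : E → E) : Prop :=
  ∀ x y : E, ‖T x - T y‖ ^ 2 + β * ‖(x - T x) - (y - T y)‖ ^ 2 ≤ ‖x - y‖ ^ 2

lemma norm_smul_add_one_sub_smul_sq [InnerProductSpace ℝ E] (θ : ℝ) (u v : E) :
    ‖θ • u + (1 - θ) • v‖ ^ 2 = θ * ‖u‖ ^ 2 + (1 - θ) * ‖v‖ ^ 2 - θ * (1 - θ) * ‖u - v‖ ^ 2 := by
  rw [norm_add_sq_real, norm_sub_sq_real, norm_smul, norm_smul, real_inner_smul_left,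
    real_inner_smul_right, mul_pow, mul_pow, Real.norm_eq_abs, Real.norm_eq_abs, sq_abs, sq_abs]
  ring

lemma AveragedIneq.of_averaged [InnerProductSpace ℝ E] {θ : ℝ} (hθ : 0 < θ) {T' U : E → E}
    (hT' : ∀ x y, ‖T' x - T' y‖ ≤ ‖x - y‖) (hU : ∀ x, U x = θ • T' x + (1 - θ) • x) :
    AveragedIneq ((1 - θ) / θ) U := by
  intro x y
  have hUxy : U x - U y = θ • (T' x - T' y) + (1 - θ) • (x - y) := by
    rw [hU, hU]; module
  have hresid : (x - U x) - (y - U y) = θ • ((x - y) - (T' x - T' y)) := by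
    rw [hU, hU]; module
  have hsq : ‖T' x - T' y‖ ^ 2 ≤ ‖x - y‖ ^ 2 := pow_le_pow_left₀ (norm_nonneg _) (hT' x y) 2
  rw [hUxy, hresid, norm_smul_add_one_sub_smul_sq, norm_smul, Real.norm_of_nonneg hθ.le,
    norm_sub_rev (x - y)]
  have hβ : (1 - θ) / θ * (θ * ‖T' x - T' y - (x - y)‖) ^ 2
      = θ * (1 - θ) * ‖T' x - T' y - (x - y)‖ ^ 2 := by
    field_simp
  nlinarith

lemma mul_div_add_mul_norm_add_sq_le {β₁ β₂ : ℝ} (hβ₁ : 0 < β₁) (hβ₂ : 0 < β₂) (a b : E) :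
    β₁ * β₂ / (β₁ + β₂) * ‖a + b‖ ^ 2 ≤ β₁ * ‖a‖ ^ 2 + β₂ * ‖b‖ ^ 2 := by
  rw [div_mul_eq_mul_div, div_le_iff₀ (by positivity)]
  have h : ‖a + b‖ ^ 2 ≤ (‖a‖ + ‖b‖) ^ 2 := pow_le_pow_left₀ (norm_nonneg _) (norm_add_le a b) 2
  nlinarith [mul_le_mul_of_nonneg_left h (mul_pos hβ₁ hβ₂).le, sq_nonneg (β₁ * ‖a‖ - β₂ * ‖b‖)]

lemma AveragedIneq.comp {β₁ β₂ : ℝ} (hβ₁ : 0 < β₁) (hβ₂ : 0 < β₂) {T₁ T₂ : E → E}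
    (h₂ : AveragedIneq β₂ T₂) (h₁ : AveragedIneq β₁ T₁) :
    AveragedIneq (β₁ * β₂ / (β₁ + β₂)) (T₂ ∘ T₁) := by
  intro x y
  have hresid : ((x - T₁ x) - (y - T₁ y)) + ((T₁ x - T₂ (T₁ x)) - (T₁ y - T₂ (T₁ y)))
      = (x - T₂ (T₁ x)) - (y - T₂ (T₁ y)) := by abel
  have hharm := mul_div_add_mul_norm_add_sq_le hβ₁ hβ₂ ((x - T₁ x) - (y - T₁ y))
    ((T₁ x - T₂ (T₁ x)) - (T₁ y - T₂ (T₁ y)))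
  rw [hresid] at hharm
  simp only [comp_apply]
  linarith [h₁ x y, h₂ (T₁ x) (T₁ y)]

lemma AveragedIneq.iterate {β : ℝ} (hβ : 0 < β) {T : E → E} (h : AveragedIneq β T)
    {n : ℕ} (hn : 1 ≤ n) : AveragedIneq (β / n) T^[n] := by
  induction n, hn using Nat.le_induction with
  | base => simpa using h
  | succ n hn ih =>
    have hn' : (0 : ℝ) < n := by exact_mod_cast hn
    have hβn : β / n * β / (β / n + β) = β / (n + 1 : ℕ) := by
      push_cast
      field_simp
      ring
    rw [iterate_succ', ← hβn]
    exact h.comp (by positivity) hβ ih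

lemma AveragedIneq.sum_smul [NormedSpace ℝ E] {ι : Type*} [Fintype ι] {β : ℝ} (hβ : 0 ≤ β) {w : ι → ℝ}
    (hw₀ : ∀ i, 0 ≤ w i) (hw₁ : ∑ i, w i = 1) {U : ι → E → E} (h : ∀ i, AveragedIneq β (U i)) :
    AveragedIneq β (fun x => ∑ i, w i • U i x) := by
  intro x y
  have hjensen : ∀ p : ι → E, ‖∑ i, w i • p i‖ ^ 2 ≤ ∑ i, w i * ‖p i‖ ^ 2 := fun p =>
    (convexOn_univ_norm.pow (fun _ _ => norm_nonneg _) 2).map_sum_le (fun i _ => hw₀ i) hw₁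
      (fun _ _ => Set.mem_univ _)
  have hdiff : ∑ i, w i • U i x - ∑ i, w i • U i y = ∑ i, w i • (U i x - U i y) := by
    simp only [smul_sub, sum_sub_distrib]
  have hresid : (x - ∑ i, w i • U i x) - (y - ∑ i, w i • U i y)
      = ∑ i, w i • ((x - U i x) - (y - U i y)) := by
    simp only [smul_sub, sum_sub_distrib, ← Finset.sum_smul, hw₁, one_smul]
  calc ‖∑ i, w i • U i x - ∑ i, w i • U i y‖ ^ 2
        + β * ‖(x - ∑ i, w i • U i x) - (y - ∑ i, w i • U i y)‖ ^ 2
      ≤ ∑ i, w i * ‖U i x - U i y‖ ^ 2 + β * ∑ i, w i * ‖(x - U i x) - (y - U i y)‖ ^ 2 := by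
        rw [hdiff, hresid]
        gcongr
        exacts [hjensen _, hjensen _]
    _ = ∑ i, w i * (‖U i x - U i y‖ ^ 2 + β * ‖(x - U i x) - (y - U i y)‖ ^ 2) := by
        rw [mul_sum, ← sum_add_distrib]
        congr 1 with i
        ring
    _ ≤ ∑ i, w i * ‖x - y‖ ^ 2 := by gcongr with i; exacts [hw₀ i, h i x y]
    _ = ‖x - y‖ ^ 2 := by rw [← sum_mul, hw₁, one_mul]

lemma AveragedIneq.average [NormedSpace ℝ E] {ι : Type*} [Fintype ι] [Nonempty ι] {β : ℝ} (hβ : 0 ≤ β)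
    {U : ι → E → E} (h : ∀ i, AveragedIneq β (U i)) :
    AveragedIneq β (fun x => (Fintype.card ι : ℝ)⁻¹ • ∑ i, U i x) := by
  have hcard : (Fintype.card ι : ℝ) ≠ 0 := by positivity
  simpa only [smul_sum] using
    AveragedIneq.sum_smul hβ (fun _ => by positivity) (by simp [hcard]) h

lemma AveragedIneq.norm_sub_sq_le_of_isFixedPt {β : ℝ} {T : E → E} (h : AveragedIneq β T)
    {p : E} (hp : IsFixedPt T p) (x : E) :
    ‖T x - p‖ ^ 2 ≤ ‖x - p‖ ^ 2 - β * ‖T x - x‖ ^ 2 := by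
  have := h x p
  rw [hp.eq, sub_self, sub_zero, norm_sub_rev x] at this
  linarith

end AveragedIneq

theorem stmt_1_general (d M : ℕ) (hM : 0 < M)
    (T : Fin M → EuclideanSpace ℝ (Fin d) → EuclideanSpace ℝ (Fin d))
    (α : ℝ) (hα0 : 0 < α)
    (hT : ∀ i, ∃ T' : EuclideanSpace ℝ (Fin d) → EuclideanSpace ℝ (Fin d),
      (∀ x y, ‖T' x - T' y‖ ≤ ‖x - y‖) ∧ ∀ x, T i x = α • T' x + (1 - α) • x)
    (l : ℝ) (hl0 : 0 < l) (hl1 : l < 1 / α)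
    (H : ℕ) (hH : 1 ≤ H)
    (S : EuclideanSpace ℝ (Fin d) → EuclideanSpace ℝ (Fin d))
    (hS : ∀ x, S x = (M : ℝ)⁻¹ • ∑ i, (fun z => l • T i z + (1 - l) • z)^[H] x)
    (ζ : ℝ) (hζ : ζ = (H : ℝ) * α * l / (1 + ((H : ℝ) - 1) * α * l))
    (xd : EuclideanSpace ℝ (Fin d)) (hxd : S xd = xd)
    (y : ℕ → EuclideanSpace ℝ (Fin d)) (hy : ∀ n, y (n + 1) = S (y n)) :
    ∀ n : ℕ, ‖y (n + 1) - xd‖ ^ 2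
      ≤ ‖y n - xd‖ ^ 2 - (1 - ζ) / ζ * ‖y (n + 1) - y n‖ ^ 2 := by
  have hθ0 : 0 < α * l := mul_pos hα0 hl0
  have hθ1 : α * l < 1 := by rwa [lt_div_iff₀ hα0, mul_comm] at hl1
  have hβ : 0 < (1 - α * l) / (α * l) := div_pos (by linarith) hθ0
  have hrelaxed : ∀ i, AveragedIneq ((1 - α * l) / (α * l)) (fun z => l • T i z + (1 - l) • z) :=
    fun i =>
      let ⟨T', hT', hTi⟩ := hT i
      .of_averaged hθ0 hT' fun x => by simp only [hTi]; module
  have hNonempty : Nonempty (Fin M) := ⟨⟨0, hM⟩⟩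
  have hSavg : AveragedIneq ((1 - α * l) / (α * l) / H) S := by
    have hS' : S = fun x => (Fintype.card (Fin M) : ℝ)⁻¹ •
        ∑ i, (fun z => l • T i z + (1 - l) • z)^[H] x := by
      ext1 x; rw [hS, Fintype.card_fin]
    rw [hS']
    exact .average (by positivity) fun i => (hrelaxed i).iterate hβ hH
  have hζβ : (1 - ζ) / ζ = (1 - α * l) / (α * l) / H := by
    have hH' : (1 : ℝ) ≤ H := by exact_mod_cast hH
    have hden : 0 < 1 + ((H : ℝ) - 1) * α * l := by nlinarith
    rw [hζ, one_sub_div hden.ne', div_div_div_cancel_right₀ hden.ne']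
    field_simp
    ring
  intro n
  rw [hy n, hζβ]
  exact hSavg.norm_sub_sq_le_of_isFixedPt hxd (y n)

/-- Fejér-type decrease for the iterates of 𝒯̃_λ towards a fixed
point x†, with ζ = Hαλ / (1 + (H−1)αλ). -/
theorem stmt_1 (d M : ℕ) (hM : 0 < M)
    (T : Fin M → EuclideanSpace ℝ (Fin d) → EuclideanSpace ℝ (Fin d))
    (α : ℝ) (hα0 : 0 < α) (hα1 : α ≤ 1)
    (hT : ∀ i, ∃ T' : EuclideanSpace ℝ (Fin d) → EuclideanSpace ℝ (Fin d),
      (∀ x y, ‖T' x - T' y‖ ≤ ‖x - y‖) ∧ ∀ x, T i x = α • T' x + (1 - α) • x)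
    (l : ℝ) (hl0 : 0 < l) (hl1 : l < 1 / α)
    (H : ℕ) (hH : 1 ≤ H)
    (S : EuclideanSpace ℝ (Fin d) → EuclideanSpace ℝ (Fin d))
    (hS : ∀ x, S x = (M : ℝ)⁻¹ • ∑ i, (fun z => l • T i z + (1 - l) • z)^[H] x)
    (ζ : ℝ) (hζ : ζ = (H : ℝ) * α * l / (1 + ((H : ℝ) - 1) * α * l))
    (xd : EuclideanSpace ℝ (Fin d)) (hxd : S xd = xd)
    (y : ℕ → EuclideanSpace ℝ (Fin d)) (hy : ∀ n, y (n + 1) = S (y n)) :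
    ∀ n : ℕ, ‖y (n + 1) - xd‖ ^ 2
      ≤ ‖y n - xd‖ ^ 2 - (1 - ζ) / ζ * ‖y (n + 1) - y n‖ ^ 2 :=
  stmt_1_general d M hM T α hα0 hT l hl0 hl1 H hH S hS ζ hζ xd hxd y hy
end

section
/- Let T_1, ..., T_M be operators on ℝ^d, each α-averaged for some α ∈ (0,1], let λ ∈ (0, 1/α), let H ≥ 1 be an integer, and set 𝒯̃_λ = (1/M) Σ_{i=1}^M (λT_i + (1−λ)Id)^H. Assume 𝒯̃_λ has a fixed point, and let (y_n) be defined by y_{n+1} = 𝒯̃_λ(y_n) from an arbitrary y_0 ∈ ℝ^d. Then ‖y_{n+1} − y_n‖² = o(1/n); that is, n · ‖y_{n+1} − y_n‖² → 0 as n → ∞. -/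
/-!
Relaxing an `α`-averaged operator by `λ` gives a `λα`-averaged one, an `H`-fold composition of
`β`-averaged operators is `(1 - (1 - β) ^ H)`-averaged, and a convex combination of
`γ`-averaged operators is `γ`-averaged; so `𝒯̃_λ` is `γ`-averaged with `0 < γ < 1`.
For such an operator `S` with fixed point `x⋆` one has
`‖S x - x⋆‖² + (1 - γ) / γ · ‖S x - x‖² ≤ ‖x - x⋆‖²`, so `‖y (n + 1) - y n‖²` is summable by
telescoping. It is also nonincreasing since `S` is nonexpansive, and a nonincreasing summable
sequence is `o(1 / n)`.
-/

open Filter Topology Function Finset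

theorem Antitone.tendsto_natCast_mul_of_summable {f : ℕ → ℝ} (hf : Antitone f)
    (hs : Summable f) : Tendsto (fun n : ℕ => (n : ℝ) * f n) atTop (𝓝 0) := by
  have hf0 : ∀ n, 0 ≤ f n := hf.le_of_tendsto hs.tendsto_atTop_zero
  have htail : Tendsto (fun n => 2 * ∑' k, f (k + n / 2)) atTop (𝓝 0) := by
    simpa using ((tendsto_sum_nat_add f).comp (Nat.tendsto_div_const_atTop two_ne_zero)).const_mul 2
  refine squeeze_zero (fun n => mul_nonneg n.cast_nonneg (hf0 n)) (fun n => ?_) htail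
  -- the last `n - n / 2` terms before `f n` each dominate it, and they make up at least half of `n`
  have hhalf : (n : ℝ) ≤ 2 * (n - n / 2 : ℕ) := by
    exact_mod_cast (by omega : n ≤ 2 * (n - n / 2))
  calc (n : ℝ) * f n ≤ 2 * ((n - n / 2 : ℕ) * f n) := by nlinarith [hf0 n]
    _ = 2 * ∑ _k ∈ range (n - n / 2), f n := by simp
    _ ≤ 2 * ∑ k ∈ range (n - n / 2), f (k + n / 2) := by
        gcongr with k hk
        exact hf (by simp only [mem_range] at hk; omega)
    _ ≤ 2 * ∑' k, f (k + n / 2) := by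
        gcongr
        exact ((summable_nat_add_iff _).2 hs).sum_le_tsum _ fun k _ => hf0 _

lemma lipschitzWith_one_iff_norm_sub_le {E F : Type*} [SeminormedAddCommGroup E]
    [SeminormedAddCommGroup F] {f : E → F} :
    LipschitzWith 1 f ↔ ∀ x y, ‖f x - f y‖ ≤ ‖x - y‖ := by
  simp [lipschitzWith_iff_norm_sub_le]

lemma antitone_sq_norm_succ_sub {E : Type*} [SeminormedAddCommGroup E] {S : E → E}
    (hS : LipschitzWith 1 S) {y : ℕ → E} (hy : ∀ n, y (n + 1) = S (y n)) :
    Antitone fun n => ‖y (n + 1) - y n‖ ^ 2 :=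
  antitone_nat_of_succ_le fun n => by
    have h := lipschitzWith_one_iff_norm_sub_le.1 hS (y (n + 1)) (y n)
    rw [← hy, ← hy] at h
    gcongr

section Normed

variable {E : Type*} [NormedAddCommGroup E] [NormedSpace ℝ E]

lemma lipschitzWith_one_smul_add_smul {f g : E → E} (hf : LipschitzWith 1 f)
    (hg : LipschitzWith 1 g) {a b : ℝ} (ha : 0 ≤ a) (hb : 0 ≤ b) (hab : a + b = 1) :
    LipschitzWith 1 (fun x => a • f x + b • g x) := by
  rw [lipschitzWith_one_iff_norm_sub_le] at *
  intro x y
  rw [← mem_closedBall_zero_iff]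
  convert convex_closedBall (0 : E) ‖x - y‖ (by simpa using hf x y) (by simpa using hg x y)
    ha hb hab using 1
  module

lemma lipschitzWith_one_sum_smul {ι : Type*} [Fintype ι] {w : ι → ℝ} {f : ι → E → E}
    (hw0 : ∀ i, 0 ≤ w i) (hw1 : ∑ i, w i = 1) (hf : ∀ i, LipschitzWith 1 (f i)) :
    LipschitzWith 1 (fun x => ∑ i, w i • f i x) := by
  rw [lipschitzWith_one_iff_norm_sub_le]
  intro x y
  have h := (convex_closedBall (0 : E) ‖x - y‖).sum_mem (t := univ)
    (z := fun i => f i x - f i y) (fun i _ => hw0 i) hw1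
    fun i _ => by simpa using lipschitzWith_one_iff_norm_sub_le.1 (hf i) x y
  rw [mem_closedBall_zero_iff] at h
  simpa [← sum_sub_distrib, smul_sub] using h

def IsAveraged (β : ℝ) (f : E → E) : Prop :=
  ∃ g : E → E, LipschitzWith 1 g ∧ ∀ x, f x = β • g x + (1 - β) • x

namespace IsAveraged

variable {α β γ : ℝ} {f g : E → E}

lemma lipschitzWith_one (hf : IsAveraged β f) (hβ0 : 0 ≤ β) (hβ1 : β ≤ 1) :
    LipschitzWith 1 f := by
  obtain ⟨f', hf', hff'⟩ := hf
  rw [show f = fun x => β • f' x + (1 - β) • id x from funext hff']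
  exact lipschitzWith_one_smul_add_smul hf' LipschitzWith.id hβ0 (by linarith) (by ring)

lemma relax (hf : IsAveraged α f) (l : ℝ) :
    IsAveraged (l * α) (fun x => l • f x + (1 - l) • x) := by
  obtain ⟨f', hf', hff'⟩ := hf
  exact ⟨f', hf', fun x => by simp only [hff']; module⟩

lemma comp (hf : IsAveraged β f) (hg : IsAveraged γ g) (hβ0 : 0 < β) (hβ1 : β ≤ 1)
    (hγ0 : 0 ≤ γ) (hγ1 : γ ≤ 1) : IsAveraged (1 - (1 - β) * (1 - γ)) (f ∘ g) := by
  have hg_lip := hg.lipschitzWith_one hγ0 hγ1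
  obtain ⟨f', hf', hff'⟩ := hf
  obtain ⟨g', hg', hgg'⟩ := hg
  set δ := 1 - (1 - β) * (1 - γ)
  have hδ : 0 < δ := by nlinarith
  refine ⟨fun x => (β / δ) • f' (g x) + ((1 - β) * γ / δ) • g' x, ?_, fun x => ?_⟩
  · refine lipschitzWith_one_smul_add_smul (by simpa [comp_def] using hf'.comp hg_lip) hg'
      (by positivity) (div_nonneg (mul_nonneg (by linarith) hγ0) hδ.le) ?_
    field_simp
    ring
  · simp only [comp_apply]
    rw [hff', smul_add, smul_smul, smul_smul, mul_div_cancel₀ _ hδ.ne',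
      mul_div_cancel₀ _ hδ.ne', hgg']
    module

lemma iterate (hf : IsAveraged β f) (hβ0 : 0 < β) (hβ1 : β ≤ 1) :
    ∀ n : ℕ, IsAveraged (1 - (1 - β) ^ n) f^[n]
  | 0 => ⟨id, LipschitzWith.id, fun x => by simp⟩
  | n + 1 => by
    have hpow0 : 0 ≤ (1 - β) ^ n := pow_nonneg (by linarith) n
    have hpow1 : (1 - β) ^ n ≤ 1 := pow_le_one₀ (by linarith) (by linarith)
    rw [iterate_succ']
    convert hf.comp (hf.iterate hβ0 hβ1 n) hβ0 hβ1 (by linarith) (by linarith) using 1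
    ring

end IsAveraged

lemma isAveraged_sum_smul {ι : Type*} [Fintype ι] {β : ℝ} {w : ι → ℝ} {f : ι → E → E}
    (hw0 : ∀ i, 0 ≤ w i) (hw1 : ∑ i, w i = 1) (hf : ∀ i, IsAveraged β (f i)) :
    IsAveraged β (fun x => ∑ i, w i • f i x) := by
  choose g hg hfg using hf
  refine ⟨fun x => ∑ i, w i • g i x, lipschitzWith_one_sum_smul hw0 hw1 hg, fun x => ?_⟩
  simp only [hfg, smul_add, sum_add_distrib, smul_comm (w _) β, ← smul_sum, ← sum_smul, hw1,
    one_smul]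

end Normed

section InnerProduct

variable {E : Type*} [NormedAddCommGroup E] [InnerProductSpace ℝ E]

lemma norm_smul_add_one_sub_smul_sq_s4 (t : ℝ) (a b : E) :
    ‖t • a + (1 - t) • b‖ ^ 2
      = t * ‖a‖ ^ 2 + (1 - t) * ‖b‖ ^ 2 - t * (1 - t) * ‖a - b‖ ^ 2 := by
  simp only [← real_inner_self_eq_norm_sq, inner_add_add_self, inner_sub_sub_self,
    real_inner_smul_left, real_inner_smul_right]
  ring

namespace IsAveraged

variable {γ : ℝ} {S : E → E}

lemma sq_norm_sub_fixedPt_add_le (hS : IsAveraged γ S) (hγ : 0 < γ) {xs : E}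
    (hxs : IsFixedPt S xs) (x : E) :
    ‖S x - xs‖ ^ 2 + (1 - γ) / γ * ‖S x - x‖ ^ 2 ≤ ‖x - xs‖ ^ 2 := by
  obtain ⟨g, hg, hSg⟩ := hS
  have hgxs : g xs = xs := by
    have h : γ • (g xs - xs) = 0 := by
      have := hSg xs
      rw [hxs] at this
      linear_combination (norm := module) -this
    exact sub_eq_zero.1 ((smul_eq_zero.1 h).resolve_left hγ.ne')
  have hu : ‖g x - xs‖ ≤ ‖x - xs‖ := by
    simpa [hgxs] using lipschitzWith_one_iff_norm_sub_le.1 hg x xs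
  have h1 : S x - xs = γ • (g x - xs) + (1 - γ) • (x - xs) := by rw [hSg]; module
  have h2 : S x - x = γ • (g x - x) := by rw [hSg]; module
  rw [h1, h2, norm_smul_add_one_sub_smul_sq_s4, norm_smul, Real.norm_of_nonneg hγ.le,
    sub_sub_sub_cancel_right]
  have : (1 - γ) / γ * (γ * ‖g x - x‖) ^ 2 = γ * (1 - γ) * ‖g x - x‖ ^ 2 := by
    field_simp
  nlinarith [mul_le_mul_of_nonneg_left (pow_le_pow_left₀ (norm_nonneg _) hu 2) hγ.le]

lemma summable_sq_norm_succ_sub (hS : IsAveraged γ S) (hγ0 : 0 < γ) (hγ1 : γ < 1) {xs : E}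
    (hxs : IsFixedPt S xs) {y : ℕ → E} (hy : ∀ n, y (n + 1) = S (y n)) :
    Summable fun n => ‖y (n + 1) - y n‖ ^ 2 := by
  set c := (1 - γ) / γ
  have hc : 0 < c := div_pos (by linarith) hγ0
  have hstep (n : ℕ) :
      c * ‖y (n + 1) - y n‖ ^ 2 ≤ ‖y n - xs‖ ^ 2 - ‖y (n + 1) - xs‖ ^ 2 := by
    have := hS.sq_norm_sub_fixedPt_add_le hγ0 hxs (y n)
    rw [← hy] at this
    linarith
  refine (summable_mul_left_iff hc.ne').1 <| summable_of_sum_range_le (c := ‖y 0 - xs‖ ^ 2)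
    (fun n => by positivity) fun n => ?_
  calc ∑ k ∈ range n, c * ‖y (k + 1) - y k‖ ^ 2
      ≤ ∑ k ∈ range n, (‖y k - xs‖ ^ 2 - ‖y (k + 1) - xs‖ ^ 2) :=
        sum_le_sum fun k _ => hstep k
    _ = ‖y 0 - xs‖ ^ 2 - ‖y n - xs‖ ^ 2 := sum_range_sub' _ _
    _ ≤ ‖y 0 - xs‖ ^ 2 := sub_le_self _ (by positivity)

theorem tendsto_natCast_mul_sq_norm_succ_sub (hS : IsAveraged γ S) (hγ0 : 0 < γ) (hγ1 : γ < 1)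
    {xs : E} (hxs : IsFixedPt S xs) {y : ℕ → E} (hy : ∀ n, y (n + 1) = S (y n)) :
    Tendsto (fun n : ℕ => (n : ℝ) * ‖y (n + 1) - y n‖ ^ 2) atTop (𝓝 0) :=
  (antitone_sq_norm_succ_sub (hS.lipschitzWith_one hγ0.le hγ1.le) hy
    ).tendsto_natCast_mul_of_summable (hS.summable_sq_norm_succ_sub hγ0 hγ1 hxs hy)

end IsAveraged

end InnerProduct

theorem stmt_4_general (d M : ℕ) (hM : 0 < M)
    (T : Fin M → EuclideanSpace ℝ (Fin d) → EuclideanSpace ℝ (Fin d))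
    (α : ℝ) (hα0 : 0 < α)
    (hT : ∀ i, ∃ T' : EuclideanSpace ℝ (Fin d) → EuclideanSpace ℝ (Fin d),
      (∀ x y, ‖T' x - T' y‖ ≤ ‖x - y‖) ∧ ∀ x, T i x = α • T' x + (1 - α) • x)
    (l : ℝ) (hl0 : 0 < l) (hl1 : l < 1 / α)
    (H : ℕ) (hH : 1 ≤ H)
    (S : EuclideanSpace ℝ (Fin d) → EuclideanSpace ℝ (Fin d))
    (hS : ∀ x, S x = (M : ℝ)⁻¹ • ∑ i, (fun z => l • T i z + (1 - l) • z)^[H] x)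
    (hfix : ∃ xd, S xd = xd)
    (y : ℕ → EuclideanSpace ℝ (Fin d)) (hy : ∀ n, y (n + 1) = S (y n)) :
    Filter.Tendsto (fun n : ℕ => (n : ℝ) * ‖y (n + 1) - y n‖ ^ 2)
      Filter.atTop (nhds 0) := by
  obtain ⟨xs, hxs⟩ := hfix
  have hβ0 : 0 < l * α := by positivity
  have hβ1 : l * α < 1 := by rwa [lt_div_iff₀ hα0] at hl1
  have hγ0 : 0 < 1 - (1 - l * α) ^ H :=
    sub_pos.2 (pow_lt_one₀ (by linarith) (by linarith) (by omega))
  have hγ1 : 1 - (1 - l * α) ^ H < 1 := sub_lt_self _ (pow_pos (by linarith) H)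
  have hR (i : Fin M) : IsAveraged (l * α) (fun z => l • T i z + (1 - l) • z) := by
    obtain ⟨T', hT', hTT'⟩ := hT i
    exact IsAveraged.relax ⟨T', lipschitzWith_one_iff_norm_sub_le.2 hT', hTT'⟩ l
  have hSavg : IsAveraged (1 - (1 - l * α) ^ H) S := by
    have := isAveraged_sum_smul (w := fun _ => (M : ℝ)⁻¹) (fun _ => by positivity)
      (by simp [hM.ne']) fun i => (hR i).iterate hβ0 hβ1.le H
    rw [show S = _ from funext hS]
    simpa only [smul_sum] using this
  exact hSavg.tendsto_natCast_mul_sq_norm_succ_sub hγ0 hγ1 hxs hy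

/-- o(1/n) rate, i.e. n·‖y_{n+1} − y_n‖² → 0, for the iterates
of 𝒯̃_λ, assuming 𝒯̃_λ has a fixed point. -/
theorem stmt_4 (d M : ℕ) (hM : 0 < M)
    (T : Fin M → EuclideanSpace ℝ (Fin d) → EuclideanSpace ℝ (Fin d))
    (α : ℝ) (hα0 : 0 < α) (hα1 : α ≤ 1)
    (hT : ∀ i, ∃ T' : EuclideanSpace ℝ (Fin d) → EuclideanSpace ℝ (Fin d),
      (∀ x y, ‖T' x - T' y‖ ≤ ‖x - y‖) ∧ ∀ x, T i x = α • T' x + (1 - α) • x)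
    (l : ℝ) (hl0 : 0 < l) (hl1 : l < 1 / α)
    (H : ℕ) (hH : 1 ≤ H)
    (S : EuclideanSpace ℝ (Fin d) → EuclideanSpace ℝ (Fin d))
    (hS : ∀ x, S x = (M : ℝ)⁻¹ • ∑ i, (fun z => l • T i z + (1 - l) • z)^[H] x)
    (hfix : ∃ xd, S xd = xd)
    (y : ℕ → EuclideanSpace ℝ (Fin d)) (hy : ∀ n, y (n + 1) = S (y n)) :
    Filter.Tendsto (fun n : ℕ => (n : ℝ) * ‖y (n + 1) - y n‖ ^ 2)
      Filter.atTop (nhds 0) :=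
  stmt_4_general d M hM T α hα0 hT l hl0 hl1 H hH S hS hfix y hy
end

section
/- Let T_1, ..., T_M be operators on ℝ^d, each χ-contractive for some χ ∈ [0,1), let λ ∈ (0, 2/(1+χ)), let H ≥ 1 be an integer, set ξ = max(λχ + (1−λ), λ(1+χ) − 1), and set 𝒯̃_λ = (1/M) Σ_{i=1}^M (λT_i + (1−λ)Id)^H. Then 𝒯̃_λ has a unique fixed point x†, and the sequence (y_n) defined by y_{n+1} = 𝒯̃_λ(y_n) from any y_0 ∈ ℝ^d satisfies, for every n ∈ ℕ, ‖y_{n+1} − x†‖ ≤ ξ^H ‖y_n − x†‖, and consequently ‖y_n − x†‖ ≤ ξ^{nH} ‖y_0 − x†‖. -/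
/-- with χ-contractive operators T_i and λ ∈ (0, 2/(1+χ)),
𝒯̃_λ has a unique fixed point x†, and its iterates converge linearly to x†
with rate ξ^H per iteration, ξ = max(λχ + (1−λ), λ(1+χ) − 1). -/
theorem stmt_7 (d M : ℕ) (hM : 0 < M)
    (T : Fin M → EuclideanSpace ℝ (Fin d) → EuclideanSpace ℝ (Fin d))
    (χ : ℝ) (hχ0 : 0 ≤ χ) (hχ1 : χ < 1)
    (hT : ∀ i, ∀ x y, ‖T i x - T i y‖ ≤ χ * ‖x - y‖)
    (l : ℝ) (hl0 : 0 < l) (hl1 : l < 2 / (1 + χ))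
    (H : ℕ) (hH : 1 ≤ H)
    (ξ : ℝ) (hξ : ξ = max (l * χ + (1 - l)) (l * (1 + χ) - 1))
    (S : EuclideanSpace ℝ (Fin d) → EuclideanSpace ℝ (Fin d))
    (hS : ∀ x, S x = (M : ℝ)⁻¹ • ∑ i, (fun z => l • T i z + (1 - l) • z)^[H] x) :
    ∃ xd : EuclideanSpace ℝ (Fin d), S xd = xd ∧ (∀ z, S z = z → z = xd) ∧
      ∀ y : ℕ → EuclideanSpace ℝ (Fin d), (∀ n, y (n + 1) = S (y n)) →
        (∀ n : ℕ, ‖y (n + 1) - xd‖ ≤ ξ ^ H * ‖y n - xd‖) ∧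
        (∀ n : ℕ, ‖y n - xd‖ ≤ ξ ^ (n * H) * ‖y 0 - xd‖) := by
  have h1χ : (0:ℝ) < 1 + χ := by linarith
  have hl2 : l * (1 + χ) < 2 := by
    rw [div_eq_mul_inv] at hl1
    calc l * (1 + χ) < 2 * (1 + χ)⁻¹ * (1 + χ) := by
          apply mul_lt_mul_of_pos_right hl1 h1χ
      _ = 2 := by field_simp
  have hξ0 : 0 ≤ ξ := by
    rw [hξ]
    rcases le_or_gt l 1 with h | h
    · exact le_max_of_le_left (by nlinarith)
    · exact le_max_of_le_right (by nlinarith)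
  have hξ1 : ξ < 1 := by
    rw [hξ]
    apply max_lt
    · nlinarith
    · linarith
  set U : Fin M → EuclideanSpace ℝ (Fin d) → EuclideanSpace ℝ (Fin d) :=
    fun i z => l • T i z + (1 - l) • z with hU
  have hUlip : ∀ i x y, ‖U i x - U i y‖ ≤ ξ * ‖x - y‖ := by
    intro i x y
    have : U i x - U i y = l • (T i x - T i y) + (1 - l) • (x - y) := by
      simp [hU, smul_sub]; abel
    rw [this]
    calc ‖l • (T i x - T i y) + (1 - l) • (x - y)‖
        ≤ ‖l • (T i x - T i y)‖ + ‖(1 - l) • (x - y)‖ := norm_add_le _ _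
      _ = l * ‖T i x - T i y‖ + |1 - l| * ‖x - y‖ := by
          rw [norm_smul, norm_smul, Real.norm_eq_abs, Real.norm_eq_abs,
            abs_of_pos hl0]
      _ ≤ l * (χ * ‖x - y‖) + |1 - l| * ‖x - y‖ := by
          have := hT i x y
          nlinarith [norm_nonneg (x - y)]
      _ ≤ ξ * ‖x - y‖ := by
          have hkey : l * χ + |1 - l| ≤ ξ := by
            rcases le_or_gt l 1 with h | h
            · rw [abs_of_nonneg (by linarith), hξ]; exact le_max_left _ _
            · rw [abs_of_neg (by linarith), hξ]
              refine le_trans (le_of_eq ?_) (le_max_right _ _)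
              ring
          nlinarith [norm_nonneg (x - y)]
  have hUiter : ∀ (n : ℕ) i x y, ‖(U i)^[n] x - (U i)^[n] y‖ ≤ ξ ^ n * ‖x - y‖ := by
    intro n
    induction n with
    | zero => intro i x y; simp
    | succ n ih =>
      intro i x y
      rw [Function.iterate_succ_apply', Function.iterate_succ_apply']
      calc ‖U i ((U i)^[n] x) - U i ((U i)^[n] y)‖
          ≤ ξ * ‖(U i)^[n] x - (U i)^[n] y‖ := hUlip i _ _
        _ ≤ ξ * (ξ ^ n * ‖x - y‖) := by
            exact mul_le_mul_of_nonneg_left (ih i x y) hξ0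
        _ = ξ ^ (n + 1) * ‖x - y‖ := by ring
  have hSlip : ∀ x y, ‖S x - S y‖ ≤ ξ ^ H * ‖x - y‖ := by
    intro x y
    rw [hS x, hS y, ← smul_sub, ← Finset.sum_sub_distrib]
    rw [norm_smul, Real.norm_eq_abs, abs_of_nonneg (by positivity)]
    calc (M:ℝ)⁻¹ * ‖∑ i, ((U i)^[H] x - (U i)^[H] y)‖
        ≤ (M:ℝ)⁻¹ * ∑ i, ‖(U i)^[H] x - (U i)^[H] y‖ := by
          apply mul_le_mul_of_nonneg_left (norm_sum_le _ _) (by positivity)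
      _ ≤ (M:ℝ)⁻¹ * ∑ _i : Fin M, ξ ^ H * ‖x - y‖ := by
          apply mul_le_mul_of_nonneg_left _ (by positivity)
          exact Finset.sum_le_sum fun i _ => hUiter H i x y
      _ = ξ ^ H * ‖x - y‖ := by
          rw [Finset.sum_const, Finset.card_univ, Fintype.card_fin, nsmul_eq_mul]
          have hMne : (M:ℝ) ≠ 0 := Nat.cast_ne_zero.mpr hM.ne'
          field_simp
  -- Banach fixed point
  have hξH1 : ξ ^ H < 1 := pow_lt_one₀ hξ0 hξ1 (by omega)
  set K : NNReal := ⟨ξ ^ H, by positivity⟩ with hK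
  have hLW : LipschitzWith K S := by
    intro x y
    rw [edist_dist, edist_dist, dist_eq_norm, dist_eq_norm]
    rw [← ENNReal.ofReal_coe_nnreal, ← ENNReal.ofReal_mul (by positivity)]
    exact ENNReal.ofReal_le_ofReal (hSlip x y)
  have hCW : ContractingWith K S := ⟨by exact_mod_cast hξH1, hLW⟩
  set xd := hCW.fixedPoint S with hxd
  have hfix : S xd = xd := hCW.fixedPoint_isFixedPt
  refine ⟨xd, hfix, fun z hz => hCW.fixedPoint_unique hz, ?_⟩
  intro y hy
  have hstep : ∀ n : ℕ, ‖y (n + 1) - xd‖ ≤ ξ ^ H * ‖y n - xd‖ := by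
    intro n
    rw [hy n]
    calc ‖S (y n) - xd‖ = ‖S (y n) - S xd‖ := by rw [hfix]
      _ ≤ ξ ^ H * ‖y n - xd‖ := hSlip _ _
  refine ⟨hstep, ?_⟩
  intro n
  induction n with
  | zero => simp
  | succ n ih =>
    calc ‖y (n + 1) - xd‖ ≤ ξ ^ H * ‖y n - xd‖ := hstep n
      _ ≤ ξ ^ H * (ξ ^ (n * H) * ‖y 0 - xd‖) := by
          exact mul_le_mul_of_nonneg_left ih (by positivity)
      _ = ξ ^ ((n + 1) * H) * ‖y 0 - xd‖ := by
          rw [← mul_assoc, ← pow_add]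
          ring_nf
end

section
/- Let T_1, ..., T_M be operators on ℝ^d, each ξ-contractive for some ξ ∈ [0,1), and let H ≥ 1 be an integer. Let x⋆ be the (unique) fixed point of the average operator 𝒯 = (1/M) Σ_{i=1}^M T_i, and let x† be the (unique) fixed point of 𝒯̃ = (1/M) Σ_{i=1}^M T_i^H, where ·^H denotes H-fold composition. Then ‖x† − x⋆‖ ≤ S, where S = (ξ/(1−ξ)) · ((1−ξ^{H−1})/(1−ξ^H)) · (1/M) Σ_{i=1}^M ‖T_i(x⋆) − x⋆‖. -/
/-- distance between the fixed point x† of 𝒯̃ = (1/M) Σ_i T_i^H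
and the fixed point x⋆ of 𝒯 = (1/M) Σ_i T_i, for ξ-contractive operators T_i:
‖x† − x⋆‖ ≤ (ξ/(1−ξ)) ((1−ξ^{H−1})/(1−ξ^H)) (1/M) Σ_i ‖T_i(x⋆) − x⋆‖. -/
theorem stmt_8 (d M : ℕ) (hM : 0 < M)
    (T : Fin M → EuclideanSpace ℝ (Fin d) → EuclideanSpace ℝ (Fin d))
    (ξ : ℝ) (hξ0 : 0 ≤ ξ) (hξ1 : ξ < 1)
    (hT : ∀ i, ∀ x y, ‖T i x - T i y‖ ≤ ξ * ‖x - y‖)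
    (H : ℕ) (hH : 1 ≤ H)
    (xs : EuclideanSpace ℝ (Fin d)) (hxs : (M : ℝ)⁻¹ • ∑ i, T i xs = xs)
    (xd : EuclideanSpace ℝ (Fin d)) (hxd : (M : ℝ)⁻¹ • ∑ i, (T i)^[H] xd = xd) :
    ‖xd - xs‖ ≤ ξ / (1 - ξ) * ((1 - ξ ^ (H - 1)) / (1 - ξ ^ H))
      * ((M : ℝ)⁻¹ * ∑ i, ‖T i xs - xs‖) := by
  -- iterated contraction
  have hiter : ∀ i n (x y : EuclideanSpace ℝ (Fin d)),
      ‖(T i)^[n] x - (T i)^[n] y‖ ≤ ξ ^ n * ‖x - y‖ := by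
    intro i n
    induction n with
    | zero => intro x y; simp
    | succ n ih =>
      intro x y
      rw [Function.iterate_succ_apply, Function.iterate_succ_apply]
      calc ‖(T i)^[n] (T i x) - (T i)^[n] (T i y)‖
          ≤ ξ ^ n * ‖T i x - T i y‖ := ih _ _
        _ ≤ ξ ^ n * (ξ * ‖x - y‖) :=
            mul_le_mul_of_nonneg_left (hT i x y) (pow_nonneg hξ0 n)
        _ = ξ ^ (n + 1) * ‖x - y‖ := by ring
  -- displacement bound
  have hdisp : ∀ i n (x : EuclideanSpace ℝ (Fin d)),
      ‖(T i)^[n] x - x‖ ≤ (∑ k ∈ Finset.range n, ξ ^ k) * ‖T i x - x‖ := by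
    intro i n x
    induction n with
    | zero => simp
    | succ n ih =>
      rw [Function.iterate_succ_apply']
      have tri : ‖T i ((T i)^[n] x) - x‖
          ≤ ‖T i ((T i)^[n] x) - T i x‖ + ‖T i x - x‖ := by
        have := norm_add_le (T i ((T i)^[n] x) - T i x) (T i x - x)
        simpa using this
      have h1 : ‖T i ((T i)^[n] x) - T i x‖ ≤ ξ * ‖(T i)^[n] x - x‖ := hT i _ _
      have h2 : ξ * ‖(T i)^[n] x - x‖ ≤ ξ * ((∑ k ∈ Finset.range n, ξ ^ k) * ‖T i x - x‖) :=
        mul_le_mul_of_nonneg_left ih hξ0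
      have : ‖T i ((T i)^[n] x) - x‖
          ≤ ξ * ((∑ k ∈ Finset.range n, ξ ^ k) * ‖T i x - x‖) + ‖T i x - x‖ := by
        linarith
      calc ‖T i ((T i)^[n] x) - x‖
          ≤ ξ * ((∑ k ∈ Finset.range n, ξ ^ k) * ‖T i x - x‖) + ‖T i x - x‖ := this
        _ = (ξ * ∑ k ∈ Finset.range n, ξ ^ k + 1) * ‖T i x - x‖ := by ring
        _ = (∑ k ∈ Finset.range (n + 1), ξ ^ k) * ‖T i x - x‖ := by
            rw [geom_sum_succ]
  set G : ℝ := ∑ k ∈ Finset.range (H - 1), ξ ^ k with hG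
  have hGnn : 0 ≤ G := Finset.sum_nonneg fun k _ => pow_nonneg hξ0 k
  -- per-operator bound
  have hper : ∀ i, ‖(T i)^[H] xd - T i xs‖
      ≤ ξ ^ H * ‖xd - xs‖ + ξ * G * ‖T i xs - xs‖ := by
    intro i
    have tri : ‖(T i)^[H] xd - T i xs‖
        ≤ ‖(T i)^[H] xd - (T i)^[H] xs‖ + ‖(T i)^[H] xs - T i xs‖ := by
      have := norm_add_le ((T i)^[H] xd - (T i)^[H] xs) ((T i)^[H] xs - T i xs)
      simpa using this
    have h1 := hiter i H xd xs
    have h2 : ‖(T i)^[H] xs - T i xs‖ ≤ ξ * G * ‖T i xs - xs‖ := by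
      have hHe : H = (H - 1) + 1 := (Nat.succ_pred_eq_of_pos hH).symm
      have : (T i)^[H] xs = (T i)^[H - 1] (T i xs) := by
        conv_lhs => rw [hHe]
        rw [Function.iterate_succ_apply]
      rw [this]
      calc ‖(T i)^[H - 1] (T i xs) - T i xs‖
          ≤ G * ‖T i (T i xs) - T i xs‖ := hdisp i (H - 1) (T i xs)
        _ ≤ G * (ξ * ‖T i xs - xs‖) := mul_le_mul_of_nonneg_left (hT i _ _) hGnn
        _ = ξ * G * ‖T i xs - xs‖ := by ring
    linarith
  -- main averaging step
  have hMpos : (0:ℝ) < M := Nat.cast_pos.mpr hM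
  have key : ‖xd - xs‖ ≤ ξ ^ H * ‖xd - xs‖
      + ξ * G * ((M : ℝ)⁻¹ * ∑ i, ‖T i xs - xs‖) := by
    have hrepr : xd - xs = (M : ℝ)⁻¹ • ∑ i, ((T i)^[H] xd - T i xs) := by
      rw [Finset.sum_sub_distrib, smul_sub, hxd, hxs]
    have h1 : ‖xd - xs‖ ≤ (M : ℝ)⁻¹ * ∑ i, ‖(T i)^[H] xd - T i xs‖ := by
      rw [hrepr, norm_smul]
      simp only [norm_inv, Real.norm_natCast]
      exact mul_le_mul_of_nonneg_left (norm_sum_le _ _) (by positivity)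
    have h2 : ∑ i, ‖(T i)^[H] xd - T i xs‖
        ≤ ∑ i, (ξ ^ H * ‖xd - xs‖ + ξ * G * ‖T i xs - xs‖) :=
      Finset.sum_le_sum fun i _ => hper i
    have h3 : ∑ i, (ξ ^ H * ‖xd - xs‖ + ξ * G * ‖T i xs - xs‖)
        = M * (ξ ^ H * ‖xd - xs‖) + ξ * G * ∑ i, ‖T i xs - xs‖ := by
      rw [Finset.sum_add_distrib, Finset.sum_const, Finset.card_univ,
        Fintype.card_fin, nsmul_eq_mul, ← Finset.mul_sum]
    have h4 : ‖xd - xs‖ ≤ (M : ℝ)⁻¹ *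
        (M * (ξ ^ H * ‖xd - xs‖) + ξ * G * ∑ i, ‖T i xs - xs‖) := by
      calc ‖xd - xs‖ ≤ (M : ℝ)⁻¹ * ∑ i, ‖(T i)^[H] xd - T i xs‖ := h1
        _ ≤ (M : ℝ)⁻¹ * (M * (ξ ^ H * ‖xd - xs‖) + ξ * G * ∑ i, ‖T i xs - xs‖) := by
            rw [← h3]
            exact mul_le_mul_of_nonneg_left h2 (by positivity)
    have hMne : (M:ℝ) ≠ 0 := ne_of_gt hMpos
    calc ‖xd - xs‖ ≤ (M : ℝ)⁻¹ *
        (M * (ξ ^ H * ‖xd - xs‖) + ξ * G * ∑ i, ‖T i xs - xs‖) := h4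
      _ = ξ ^ H * ‖xd - xs‖ + ξ * G * ((M : ℝ)⁻¹ * ∑ i, ‖T i xs - xs‖) := by
          field_simp
          try ring
  -- conclude
  set A : ℝ := (M : ℝ)⁻¹ * ∑ i, ‖T i xs - xs‖ with hA
  have hAnn : 0 ≤ A := by
    have : 0 ≤ ∑ i, ‖T i xs - xs‖ := Finset.sum_nonneg fun i _ => norm_nonneg _
    positivity
  have hξH : ξ ^ H < 1 := pow_lt_one₀ hξ0 hξ1 (by omega)
  have hdenom : 0 < 1 - ξ ^ H := by linarith
  have hGeq : G = (1 - ξ ^ (H - 1)) / (1 - ξ) := by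
    rw [hG, geom_sum_eq (ne_of_lt hξ1)]
    rw [div_eq_div_iff (by linarith) (by linarith)]
    ring
  have hgoal : ξ / (1 - ξ) * ((1 - ξ ^ (H - 1)) / (1 - ξ ^ H)) * A
      = ξ * G * A / (1 - ξ ^ H) := by
    rw [hGeq]
    field_simp
    try ring
  rw [hgoal, le_div_iff₀ hdenom]
  nlinarith [key, norm_nonneg (xd - xs)]
end

section
/- Let T_1, ..., T_M be firmly nonexpansive operators on ℝ^d, let g_i(x) = x − T_i(x), let x⋆ be a fixed point of 𝒯 = (1/M) Σ_{i=1}^M T_i, and let 0 ≤ λ ≤ 1. Let x_1, ..., x_M ∈ ℝ^d, let x̂ = (1/M) Σ_{i=1}^M x_i, let V = (1/M) Σ_{i=1}^M ‖x_i − x̂‖², and let x̂⁺ = (1/M) Σ_{i=1}^M ((1−λ)x_i + λT_i(x_i)). Then ‖x̂⁺ − x⋆‖² ≤ ‖x̂ − x⋆‖² + λ(2−λ)V − (1/2)λ(1−λ)(1/M) Σ_{i=1}^M ‖g_i(x̂) − g_i(x⋆)‖². -/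
open Finset RealInnerProductSpace

set_option maxHeartbeats 1000000 in
/-- Lemma 1, one-step recursion for Algorithm 1. -/
theorem stmt_11 (d M : ℕ) (hM : 0 < M)
    (T : Fin M → EuclideanSpace ℝ (Fin d) → EuclideanSpace ℝ (Fin d))
    (hT : ∀ i, ∀ x y, ‖T i x - T i y‖ ^ 2
      ≤ ‖x - y‖ ^ 2 - ‖T i x - x - T i y + y‖ ^ 2)
    (g : Fin M → EuclideanSpace ℝ (Fin d) → EuclideanSpace ℝ (Fin d))
    (hg : ∀ i x, g i x = x - T i x)
    (xs : EuclideanSpace ℝ (Fin d)) (hxs : (M : ℝ)⁻¹ • ∑ i, T i xs = xs)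
    (l : ℝ) (hl0 : 0 ≤ l) (hl1 : l ≤ 1)
    (x : Fin M → EuclideanSpace ℝ (Fin d))
    (xhat : EuclideanSpace ℝ (Fin d)) (hxhat : xhat = (M : ℝ)⁻¹ • ∑ i, x i)
    (V : ℝ) (hV : V = (M : ℝ)⁻¹ * ∑ i, ‖x i - xhat‖ ^ 2)
    (xplus : EuclideanSpace ℝ (Fin d))
    (hxplus : xplus = (M : ℝ)⁻¹ • ∑ i, ((1 - l) • x i + l • T i (x i))) :
    ‖xplus - xs‖ ^ 2 ≤ ‖xhat - xs‖ ^ 2 + l * (2 - l) * V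
      - 1 / 2 * l * (1 - l) * ((M : ℝ)⁻¹ * ∑ i, ‖g i xhat - g i xs‖ ^ 2) := by
  have hm0 : (0:ℝ) < (M:ℝ) := by exact_mod_cast hM
  have hmne : (M:ℝ) ≠ 0 := ne_of_gt hm0
  have hminv : (0:ℝ) ≤ (M:ℝ)⁻¹ := by positivity
  -- abbreviations
  obtain ⟨p, hp⟩ : ∃ p : Fin M → EuclideanSpace ℝ (Fin d),
      p = fun i => g i (x i) - g i xs := ⟨_, rfl⟩
  obtain ⟨h, hh⟩ : ∃ h : EuclideanSpace ℝ (Fin d), h = xhat - xs := ⟨_, rfl⟩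
  obtain ⟨P, hP⟩ : ∃ P : EuclideanSpace ℝ (Fin d),
      P = (M:ℝ)⁻¹ • ∑ i, p i := ⟨_, rfl⟩
  -- Step A : xplus - xs = h - l • P
  have hsump : ∑ i, p i = ((∑ i, x i) - (∑ i, T i (x i))) - (M • xs - ∑ i, T i xs) := by
    simp only [hp, hg]
    rw [Finset.sum_sub_distrib, Finset.sum_sub_distrib, Finset.sum_sub_distrib,
      Finset.sum_const, Finset.card_univ, Fintype.card_fin]
  have keyA : xplus - xs = h - l • P := by
    obtain ⟨C, hC⟩ : ∃ C, ∑ i, T i xs = C := ⟨_, rfl⟩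
    rw [hC] at hxs hsump
    rw [hxplus, hh, hxhat, hP, hsump]
    rw [Finset.sum_add_distrib, ← Finset.smul_sum, ← Finset.smul_sum]
    rw [← hxs]
    rw [← Nat.cast_smul_eq_nsmul ℝ M ((M:ℝ)⁻¹ • C)]
    rw [show ((M:ℝ)) • ((M:ℝ)⁻¹ • C) = C by
      rw [smul_smul, mul_inv_cancel₀ hmne, one_smul]]
    module
  -- Firm nonexpansiveness : ⟪x i - xs, p i⟫ ≥ ‖p i‖²
  have hap : ∀ i, ‖p i‖ ^ 2 ≤ ⟪x i - xs, p i⟫ := by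
    intro i
    have hpe : p i = (x i - xs) - (T i (x i) - T i xs) := by
      simp only [hp, hg]; abel
    have hneg : T i (x i) - x i - T i xs + xs = -(p i) := by
      rw [hpe]; abel
    have hT' := hT i (x i) xs
    rw [hneg, norm_neg] at hT'
    have hexp : ‖p i‖ ^ 2
        = ‖x i - xs‖ ^ 2 - 2 * ⟪x i - xs, T i (x i) - T i xs⟫
          + ‖T i (x i) - T i xs‖ ^ 2 := by
      rw [hpe, norm_sub_sq_real]
    have hinner : ⟪x i - xs, p i⟫
        = ⟪x i - xs, x i - xs⟫ - ⟪x i - xs, T i (x i) - T i xs⟫ := by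
      rw [hpe, inner_sub_right]
    have hself : ⟪x i - xs, x i - xs⟫ = ‖x i - xs‖ ^ 2 := by
      rw [real_inner_self_eq_norm_sq]
    linarith
  -- g is nonexpansive : ‖(g i xhat - g i xs) - p i‖ ≤ ‖x i - xhat‖
  have hqp : ∀ i, ‖(g i xhat - g i xs) - p i‖ ^ 2 ≤ ‖x i - xhat‖ ^ 2 := by
    intro i
    have hT' := hT i xhat (x i)
    have hneg : T i xhat - xhat - T i (x i) + x i
        = -((g i xhat - g i xs) - p i) := by
      simp only [hp, hg]; abel
    rw [hneg, norm_neg] at hT'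
    rw [norm_sub_rev xhat (x i)] at hT'
    nlinarith [sq_nonneg ‖T i xhat - T i (x i)‖]
  -- hence ‖q i‖² ≤ 2‖p i‖² + 2‖e i‖²
  have hq2 : ∀ i, ‖g i xhat - g i xs‖ ^ 2
      ≤ 2 * ‖p i‖ ^ 2 + 2 * ‖x i - xhat‖ ^ 2 := by
    intro i
    have h1 : ‖g i xhat - g i xs‖ ≤ ‖p i‖ + ‖(g i xhat - g i xs) - p i‖ := by
      have := norm_add_le (p i) ((g i xhat - g i xs) - p i)
      simpa using this
    nlinarith [hqp i, norm_nonneg ((g i xhat - g i xs) - p i), norm_nonneg (p i),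
      norm_nonneg (g i xhat - g i xs), sq_nonneg (‖p i‖ - ‖(g i xhat - g i xs) - p i‖)]
  -- cross term bound
  have hep : ∀ i, 2 * ⟪x i - xhat, p i⟫ ≤ ‖x i - xhat‖ ^ 2 + ‖p i‖ ^ 2 := by
    intro i
    have := norm_sub_sq_real (x i - xhat) (p i)
    nlinarith [sq_nonneg ‖(x i - xhat) - p i‖]
  -- expansion of the square
  have expand : ‖xplus - xs‖ ^ 2
      = ‖h‖ ^ 2 - 2 * l * ⟪h, P⟫ + l ^ 2 * ‖P‖ ^ 2 := by
    rw [keyA, norm_sub_sq_real, real_inner_smul_right, norm_smul,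
      Real.norm_eq_abs, abs_of_nonneg hl0]
    ring
  -- Jensen for ‖P‖²
  have hPnorm : ‖P‖ ^ 2 ≤ (M:ℝ)⁻¹ * ∑ i, ‖p i‖ ^ 2 := by
    have h1 : ‖∑ i, p i‖ ≤ ∑ i, ‖p i‖ := norm_sum_le _ _
    have h2 : (∑ i, ‖p i‖) ^ 2 ≤ (M:ℝ) * ∑ i, ‖p i‖ ^ 2 := by
      have := sq_sum_le_card_mul_sum_sq (s := (Finset.univ : Finset (Fin M)))
        (f := fun i => ‖p i‖)
      simpa using this
    have h3 : ‖P‖ ^ 2 = ((M:ℝ)⁻¹) ^ 2 * ‖∑ i, p i‖ ^ 2 := by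
      rw [hP, norm_smul, Real.norm_eq_abs, abs_of_nonneg hminv]; ring
    have h4 : ‖∑ i, p i‖ ^ 2 ≤ (∑ i, ‖p i‖) ^ 2 :=
      pow_le_pow_left₀ (norm_nonneg _) h1 2
    calc ‖P‖ ^ 2 = ((M:ℝ)⁻¹) ^ 2 * ‖∑ i, p i‖ ^ 2 := h3
      _ ≤ ((M:ℝ)⁻¹) ^ 2 * ((M:ℝ) * ∑ i, ‖p i‖ ^ 2) := by
          apply mul_le_mul_of_nonneg_left _ (by positivity)
          exact h4.trans h2
      _ = (M:ℝ)⁻¹ * ∑ i, ‖p i‖ ^ 2 := by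
          field_simp
  -- inner term as a sum
  have hinnerP : ⟪h, P⟫ = (M:ℝ)⁻¹ * ∑ i, ⟪h, p i⟫ := by
    rw [hP, real_inner_smul_right, inner_sum]
  have hdecomp : ∀ i, ⟪h, p i⟫ = ⟪x i - xs, p i⟫ - ⟪x i - xhat, p i⟫ := by
    intro i
    have : h = (x i - xs) - (x i - xhat) := by rw [hh]; abel
    rw [this, inner_sub_left]
  -- main summed inequality
  have main : ‖xplus - xs‖ ^ 2 ≤ ‖h‖ ^ 2
      + (M:ℝ)⁻¹ * ∑ i, (l * (2 - l) * ‖x i - xhat‖ ^ 2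
        - 1 / 2 * l * (1 - l) * ‖g i xhat - g i xs‖ ^ 2) := by
    have step1 : (M:ℝ)⁻¹ * ∑ i, (-(2 * l) * ⟪h, p i⟫ + l ^ 2 * ‖p i‖ ^ 2)
        ≤ (M:ℝ)⁻¹ * ∑ i, (l * (2 - l) * ‖x i - xhat‖ ^ 2
            - 1 / 2 * l * (1 - l) * ‖g i xhat - g i xs‖ ^ 2) := by
      apply mul_le_mul_of_nonneg_left _ hminv
      apply Finset.sum_le_sum
      intro i _
      have h1 : l * (2 * ⟪x i - xhat, p i⟫)
          ≤ l * (‖x i - xhat‖ ^ 2 + ‖p i‖ ^ 2) :=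
        mul_le_mul_of_nonneg_left (hep i) hl0
      have h2 : (l * (1 - l)) * ‖g i xhat - g i xs‖ ^ 2
          ≤ (l * (1 - l)) * (2 * ‖p i‖ ^ 2 + 2 * ‖x i - xhat‖ ^ 2) :=
        mul_le_mul_of_nonneg_left (hq2 i)
          (mul_nonneg hl0 (by linarith))
      have h3 : l * ‖p i‖ ^ 2 ≤ l * ⟪x i - xs, p i⟫ :=
        mul_le_mul_of_nonneg_left (hap i) hl0
      rw [hdecomp i]
      nlinarith [h1, h2, h3]
    have hsum2 : - (2 * l) * ⟪h, P⟫ + l ^ 2 * ((M:ℝ)⁻¹ * ∑ i, ‖p i‖ ^ 2)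
        = (M:ℝ)⁻¹ * ∑ i, (-(2 * l) * ⟪h, p i⟫ + l ^ 2 * ‖p i‖ ^ 2) := by
      rw [hinnerP, Finset.sum_add_distrib, ← Finset.mul_sum, ← Finset.mul_sum,
        mul_add]
      ring
    have hl2 : l ^ 2 * ‖P‖ ^ 2 ≤ l ^ 2 * ((M:ℝ)⁻¹ * ∑ i, ‖p i‖ ^ 2) :=
      mul_le_mul_of_nonneg_left hPnorm (sq_nonneg l)
    rw [expand]
    linarith [step1, hl2, hsum2.ge, hsum2.le]
  -- conclude
  have hfin : (M:ℝ)⁻¹ * ∑ i, (l * (2 - l) * ‖x i - xhat‖ ^ 2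
        - 1 / 2 * l * (1 - l) * ‖g i xhat - g i xs‖ ^ 2)
      = l * (2 - l) * V
        - 1 / 2 * l * (1 - l) * ((M:ℝ)⁻¹ * ∑ i, ‖g i xhat - g i xs‖ ^ 2) := by
    rw [hV, Finset.sum_sub_distrib, ← Finset.mul_sum, ← Finset.mul_sum]
    ring
  rw [hh] at main
  linarith [main, hfin.le, hfin.ge]
end

section
/- Let T_1, ..., T_M be firmly nonexpansive operators on ℝ^d, g_i(x) = x − T_i(x), x⋆ a fixed point of 𝒯 = (1/M) Σ_{i=1}^M T_i, and σ² = (1/M) Σ_{i=1}^M ‖x⋆ − T_i(x⋆)‖². Let H ≥ 1 be an integer, let k_p < k_{p+1} be integers with k_{p+1} − k_p ≤ H, let λ satisfy 0 < λ ≤ 1/(8·max(1, H−1)), and let x_i^k ∈ ℝ^d for i = 1,...,M and k_p ≤ k ≤ k_{p+1}−1 satisfy: x_i^{k_p} = x̂^{k_p} for all i (where x̂^k = (1/M) Σ_{i=1}^M x_i^k), and x_i^{k+1} = x_i^k − λ g_i(x_i^k) for k_p ≤ k < k_{p+1}−1. Then, with V_k = (1/M) Σ_{i=1}^M ‖x_i^k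 − x̂^k‖², Σ_{k=k_p}^{k_{p+1}−1} V_k ≤ (16/15) λ² (H−1)² Σ_{j=k_p}^{k_{p+1}−1} ( (2/M) Σ_{i=1}^M ‖g_i(x̂^j) − g_i(x⋆)‖² + 6σ² ). -/
open Finset
open scoped RealInnerProductSpace

lemma aux_cauchy {d : ℕ} (s : Finset ℕ) (u : ℕ → EuclideanSpace ℝ (Fin d)) :
    ‖∑ j ∈ s, u j‖ ^ 2 ≤ (s.card : ℝ) * ∑ j ∈ s, ‖u j‖ ^ 2 := by
  calc ‖∑ j ∈ s, u j‖ ^ 2 ≤ (∑ j ∈ s, ‖u j‖) ^ 2 := by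
        apply pow_le_pow_left₀ (norm_nonneg _) (norm_sum_le _ _)
    _ ≤ (s.card : ℝ) * ∑ j ∈ s, ‖u j‖ ^ 2 := by
        exact sq_sum_le_card_mul_sum_sq

lemma aux_var {d M : ℕ} (hM : 0 < M) (u : Fin M → EuclideanSpace ℝ (Fin d)) :
    ∑ i, ‖u i - (M : ℝ)⁻¹ • ∑ m, u m‖ ^ 2 ≤ ∑ i, ‖u i‖ ^ 2 := by
  set ub := (M : ℝ)⁻¹ • ∑ m, u m with hub
  have hMne : (M : ℝ) ≠ 0 := Nat.cast_ne_zero.mpr hM.ne'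
  have hsum : ∑ m, u m = (M : ℝ) • ub := by
    rw [hub, smul_smul, mul_inv_cancel₀ hMne, one_smul]
  have h1 : ∑ i, ‖u i - ub‖ ^ 2
      = ∑ i, ‖u i‖ ^ 2 - 2 * ⟪∑ m, u m, ub⟫ + (M : ℝ) * ‖ub‖ ^ 2 := by
    rw [show (∑ i, ‖u i - ub‖ ^ 2)
        = ∑ i, (‖u i‖ ^ 2 - 2 * ⟪u i, ub⟫ + ‖ub‖ ^ 2) from
      Finset.sum_congr rfl fun i _ => norm_sub_sq_real _ _]
    rw [Finset.sum_add_distrib, Finset.sum_sub_distrib, ← Finset.mul_sum,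
      ← sum_inner, Finset.sum_const, Finset.card_univ, Fintype.card_fin,
      nsmul_eq_mul]
  have h2 : ⟪∑ m, u m, ub⟫ = (M : ℝ) * ‖ub‖ ^ 2 := by
    rw [hsum, real_inner_smul_left, real_inner_self_eq_norm_sq]
  rw [h1, h2]
  have hMpos : (0:ℝ) < M := Nat.cast_pos.mpr hM
  nlinarith [sq_nonneg ‖ub‖, hMpos]

lemma aux_triple {d : ℕ} (a b c : EuclideanSpace ℝ (Fin d)) :
    ‖a + b + c‖ ^ 2 ≤ 4 * ‖a‖ ^ 2 + 2 * ‖b‖ ^ 2 + 4 * ‖c‖ ^ 2 := by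
  have h : ‖a + b + c‖ ≤ ‖a‖ + ‖b‖ + ‖c‖ :=
    (norm_add_le _ _).trans (by gcongr; exact norm_add_le _ _)
  nlinarith [norm_nonneg (a + b + c), norm_nonneg a, norm_nonneg b, norm_nonneg c,
    sq_nonneg (‖b‖ - ‖a‖ - ‖c‖), sq_nonneg (‖a‖ - ‖c‖)]

set_option maxHeartbeats 1000000 in
/-- Lemma 2, bound on the summed deviation V_k over an epoch. -/
theorem stmt_12 (d M : ℕ) (hM : 0 < M)
    (T : Fin M → EuclideanSpace ℝ (Fin d) → EuclideanSpace ℝ (Fin d))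
    (hT : ∀ i, ∀ x y, ‖T i x - T i y‖ ^ 2
      ≤ ‖x - y‖ ^ 2 - ‖T i x - x - T i y + y‖ ^ 2)
    (g : Fin M → EuclideanSpace ℝ (Fin d) → EuclideanSpace ℝ (Fin d))
    (hg : ∀ i x, g i x = x - T i x)
    (xs : EuclideanSpace ℝ (Fin d)) (hxs : (M : ℝ)⁻¹ • ∑ i, T i xs = xs)
    (σ2 : ℝ) (hσ2 : σ2 = (M : ℝ)⁻¹ * ∑ i, ‖xs - T i xs‖ ^ 2)
    (H : ℕ) (hH : 1 ≤ H)
    (kp kq : ℕ) (hk : kp < kq) (hkH : kq - kp ≤ H)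
    (l : ℝ) (hl0 : 0 < l) (hl1 : l ≤ 1 / (8 * max 1 ((H : ℝ) - 1)))
    (x : Fin M → ℕ → EuclideanSpace ℝ (Fin d))
    (xhat : ℕ → EuclideanSpace ℝ (Fin d))
    (hxhat : ∀ k, xhat k = (M : ℝ)⁻¹ • ∑ i, x i k)
    (hinit : ∀ i, x i kp = xhat kp)
    (hrec : ∀ k, kp ≤ k → k + 1 < kq → ∀ i, x i (k + 1) = x i k - l • g i (x i k))
    (V : ℕ → ℝ) (hV : ∀ k, V k = (M : ℝ)⁻¹ * ∑ i, ‖x i k - xhat k‖ ^ 2) :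
    ∑ k ∈ Finset.Ico kp kq, V k
      ≤ 16 / 15 * l ^ 2 * ((H : ℝ) - 1) ^ 2
        * ∑ j ∈ Finset.Ico kp kq,
          (2 / (M : ℝ) * ∑ i, ‖g i (xhat j) - g i xs‖ ^ 2 + 6 * σ2) := by
  have hMne : (M : ℝ) ≠ 0 := Nat.cast_ne_zero.mpr hM.ne'
  have hMpos : (0:ℝ) < M := Nat.cast_pos.mpr hM
  have hH1 : (0:ℝ) ≤ (H:ℝ) - 1 := by
    have : (1:ℝ) ≤ H := by exact_mod_cast hH
    linarith
  -- Lipschitz property of g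
  have hLip : ∀ i a b, ‖g i a - g i b‖ ^ 2 ≤ ‖a - b‖ ^ 2 := by
    intro i a b
    have h := hT i a b
    have heq : g i a - g i b = -(T i a - a - T i b + b) := by
      rw [hg, hg]; abel
    rw [heq, norm_neg]
    nlinarith [sq_nonneg ‖T i a - T i b‖]
  -- σ2 in terms of g
  have hgxs : σ2 = (M : ℝ)⁻¹ * ∑ i, ‖g i xs‖ ^ 2 := by
    rw [hσ2]; congr 1; exact Finset.sum_congr rfl fun i _ => by rw [hg]
  have hσ2nn : 0 ≤ σ2 := by rw [hσ2]; positivity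
  -- mean iterate recursion and unrolling
  set gb : ℕ → EuclideanSpace ℝ (Fin d) :=
    fun j => (M : ℝ)⁻¹ • ∑ i, g i (x i j) with hgb
  have hxh : ∀ k, kp ≤ k → k + 1 < kq → xhat (k + 1) = xhat k - l • gb k := by
    intro k h1 h2
    rw [hxhat, hxhat, hgb]
    have : ∀ i ∈ Finset.univ (α := Fin M), x i (k+1) = x i k - l • g i (x i k) :=
      fun i _ => hrec k h1 h2 i
    rw [Finset.sum_congr rfl this, Finset.sum_sub_distrib, smul_sub]
    congr 1
    rw [← Finset.smul_sum, smul_comm]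
  have hun : ∀ k, kp ≤ k → k < kq → ∀ i,
      x i k - xhat k = -(l • ∑ j ∈ Finset.Ico kp k, (g i (x i j) - gb j)) := by
    intro k hk0
    induction k, hk0 using Nat.le_induction with
    | base =>
      intro _ i
      rw [hinit i, Finset.Ico_self, Finset.sum_empty, smul_zero, neg_zero, sub_self]
    | succ k hk1 ih =>
      intro hk2 i
      have hkq : k < kq := Nat.lt_of_succ_lt hk2
      rw [hrec k hk1 hk2 i, hxh k hk1 hk2,
        Finset.sum_Ico_succ_top hk1, smul_add]
      have h := ih hkq i
      have : x i k - xhat k - (l • g i (x i k) - l • gb k)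
          = -(l • ∑ j ∈ Finset.Ico kp k, (g i (x i j) - gb j))
            - l • (g i (x i k) - gb k) := by
        rw [← h, smul_sub]
      calc x i k - l • g i (x i k) - (xhat k - l • gb k)
          = x i k - xhat k - (l • g i (x i k) - l • gb k) := by abel
        _ = -(l • ∑ j ∈ Finset.Ico kp k, (g i (x i j) - gb j))
            - l • (g i (x i k) - gb k) := this
        _ = -(l • ∑ j ∈ Finset.Ico kp k, (g i (x i j) - gb j)
            + l • (g i (x i k) - gb k)) := by abel
  -- deviation quantity D
  set D : ℕ → ℝ :=
    fun j => (M : ℝ)⁻¹ * ∑ i, ‖g i (x i j) - gb j‖ ^ 2 with hD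
  have hDnn : ∀ j, 0 ≤ D j := by intro j; rw [hD]; positivity
  have hVnn : ∀ k, 0 ≤ V k := by intro k; rw [hV]; positivity
  -- step 1: V k ≤ l^2 (H-1) ∑_{j<k} D j
  have hVD : ∀ k, kp ≤ k → k < kq →
      V k ≤ l ^ 2 * ((H:ℝ) - 1) * ∑ j ∈ Finset.Ico kp k, D j := by
    intro k h1 h2
    have hcard : ((Finset.Ico kp k).card : ℝ) ≤ (H:ℝ) - 1 := by
      rw [Nat.card_Ico]
      have h3 : k - kp ≤ H - 1 := by omega
      calc ((k - kp : ℕ) : ℝ) ≤ ((H - 1 : ℕ) : ℝ) := by exact_mod_cast h3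
        _ = (H:ℝ) - 1 := by
          rw [Nat.cast_sub hH]; norm_num
    have key : ∀ i, ‖x i k - xhat k‖ ^ 2
        ≤ l ^ 2 * ((H:ℝ) - 1) * ∑ j ∈ Finset.Ico kp k, ‖g i (x i j) - gb j‖ ^ 2 := by
      intro i
      rw [hun k h1 h2 i, norm_neg, norm_smul, mul_pow]
      have hc := aux_cauchy (Finset.Ico kp k) (fun j => g i (x i j) - gb j)
      have hl2 : ‖l‖ ^ 2 = l ^ 2 := by rw [Real.norm_eq_abs, sq_abs]
      rw [hl2]
      calc l ^ 2 * ‖∑ j ∈ Finset.Ico kp k, (g i (x i j) - gb j)‖ ^ 2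
          ≤ l ^ 2 * (((Finset.Ico kp k).card : ℝ)
            * ∑ j ∈ Finset.Ico kp k, ‖g i (x i j) - gb j‖ ^ 2) := by
            apply mul_le_mul_of_nonneg_left hc (by positivity)
        _ ≤ l ^ 2 * (((H:ℝ) - 1)
            * ∑ j ∈ Finset.Ico kp k, ‖g i (x i j) - gb j‖ ^ 2) := by
            apply mul_le_mul_of_nonneg_left _ (by positivity)
            apply mul_le_mul_of_nonneg_right hcard
            positivity
        _ = l ^ 2 * ((H:ℝ) - 1) * ∑ j ∈ Finset.Ico kp k, ‖g i (x i j) - gb j‖ ^ 2 := by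
            ring
    rw [hV]
    calc (M : ℝ)⁻¹ * ∑ i, ‖x i k - xhat k‖ ^ 2
        ≤ (M : ℝ)⁻¹ * ∑ i, (l ^ 2 * ((H:ℝ) - 1)
          * ∑ j ∈ Finset.Ico kp k, ‖g i (x i j) - gb j‖ ^ 2) := by
          apply mul_le_mul_of_nonneg_left (Finset.sum_le_sum fun i _ => key i)
          positivity
      _ = l ^ 2 * ((H:ℝ) - 1) * ∑ j ∈ Finset.Ico kp k, D j := by
          have hcomm : ∑ i, (l ^ 2 * ((H:ℝ) - 1)
              * ∑ j ∈ Finset.Ico kp k, ‖g i (x i j) - gb j‖ ^ 2)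
              = l ^ 2 * ((H:ℝ) - 1)
              * ∑ j ∈ Finset.Ico kp k, ∑ i, ‖g i (x i j) - gb j‖ ^ 2 := by
            rw [← Finset.mul_sum, Finset.sum_comm]
          simp only [hD]
          rw [hcomm, ← Finset.mul_sum]
          ring
  -- step 2: double sum bound
  have hdouble : ∑ k ∈ Finset.Ico kp kq, ∑ j ∈ Finset.Ico kp k, D j
      ≤ ((H:ℝ) - 1) * ∑ j ∈ Finset.Ico kp kq, D j := by
    rw [Finset.sum_eq_sum_Ico_succ_bot hk]
    rw [Finset.Ico_self, Finset.sum_empty, zero_add]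
    have hsub : ∀ k ∈ Finset.Ico (kp+1) kq,
        ∑ j ∈ Finset.Ico kp k, D j ≤ ∑ j ∈ Finset.Ico kp kq, D j := by
      intro k hkmem
      apply Finset.sum_le_sum_of_subset_of_nonneg
      · apply Finset.Ico_subset_Ico le_rfl
        exact (Finset.mem_Ico.mp hkmem).2.le
      · intro j _ _; exact hDnn j
    calc ∑ k ∈ Finset.Ico (kp+1) kq, ∑ j ∈ Finset.Ico kp k, D j
        ≤ ∑ _k ∈ Finset.Ico (kp+1) kq, ∑ j ∈ Finset.Ico kp kq, D j :=
          Finset.sum_le_sum hsub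
      _ = ((Finset.Ico (kp+1) kq).card : ℝ) * ∑ j ∈ Finset.Ico kp kq, D j := by
          rw [Finset.sum_const, nsmul_eq_mul]
      _ ≤ ((H:ℝ) - 1) * ∑ j ∈ Finset.Ico kp kq, D j := by
          apply mul_le_mul_of_nonneg_right _
            (Finset.sum_nonneg fun j _ => hDnn j)
          rw [Nat.card_Ico]
          have h3 : kq - (kp+1) ≤ H - 1 := by omega
          calc ((kq - (kp+1) : ℕ) : ℝ) ≤ ((H - 1 : ℕ) : ℝ) := by exact_mod_cast h3
            _ = (H:ℝ) - 1 := by rw [Nat.cast_sub hH]; norm_num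
  -- step 3: D j ≤ 4 V j + 2 G j + 4 σ2
  have hDbound : ∀ j, D j ≤ 4 * V j
      + (2 * ((M : ℝ)⁻¹ * ∑ i, ‖g i (xhat j) - g i xs‖ ^ 2) + 4 * σ2) := by
    intro j
    have hvar : ∑ i, ‖g i (x i j) - gb j‖ ^ 2 ≤ ∑ i, ‖g i (x i j)‖ ^ 2 :=
      aux_var hM (fun i => g i (x i j))
    have htri : ∀ i, ‖g i (x i j)‖ ^ 2
        ≤ 4 * ‖x i j - xhat j‖ ^ 2 + 2 * ‖g i (xhat j) - g i xs‖ ^ 2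
          + 4 * ‖g i xs‖ ^ 2 := by
      intro i
      have hdecomp : g i (x i j) = (g i (x i j) - g i (xhat j))
          + (g i (xhat j) - g i xs) + g i xs := by abel
      calc ‖g i (x i j)‖ ^ 2
          = ‖(g i (x i j) - g i (xhat j)) + (g i (xhat j) - g i xs) + g i xs‖ ^ 2 := by
            rw [← hdecomp]
        _ ≤ 4 * ‖g i (x i j) - g i (xhat j)‖ ^ 2 + 2 * ‖g i (xhat j) - g i xs‖ ^ 2
            + 4 * ‖g i xs‖ ^ 2 := aux_triple _ _ _
        _ ≤ 4 * ‖x i j - xhat j‖ ^ 2 + 2 * ‖g i (xhat j) - g i xs‖ ^ 2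
            + 4 * ‖g i xs‖ ^ 2 := by
            have := hLip i (x i j) (xhat j)
            linarith
    have hsum2 : ∑ i, ‖g i (x i j)‖ ^ 2
        ≤ ∑ i, (4 * ‖x i j - xhat j‖ ^ 2 + 2 * ‖g i (xhat j) - g i xs‖ ^ 2
          + 4 * ‖g i xs‖ ^ 2) := Finset.sum_le_sum fun i _ => htri i
    rw [hD, hV, hgxs]
    have hexp : ∑ i, (4 * ‖x i j - xhat j‖ ^ 2 + 2 * ‖g i (xhat j) - g i xs‖ ^ 2
          + 4 * ‖g i xs‖ ^ 2)
        = 4 * ∑ i, ‖x i j - xhat j‖ ^ 2 + 2 * ∑ i, ‖g i (xhat j) - g i xs‖ ^ 2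
          + 4 * ∑ i, ‖g i xs‖ ^ 2 := by
      rw [Finset.sum_add_distrib, Finset.sum_add_distrib,
        ← Finset.mul_sum, ← Finset.mul_sum, ← Finset.mul_sum]
    have hstep : (M : ℝ)⁻¹ * ∑ i, ‖g i (x i j) - gb j‖ ^ 2
        ≤ (M : ℝ)⁻¹ * (4 * ∑ i, ‖x i j - xhat j‖ ^ 2
          + 2 * ∑ i, ‖g i (xhat j) - g i xs‖ ^ 2 + 4 * ∑ i, ‖g i xs‖ ^ 2) := by
      apply mul_le_mul_of_nonneg_left _ (by positivity)
      rw [← hexp]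
      exact hvar.trans hsum2
    calc (M : ℝ)⁻¹ * ∑ i, ‖g i (x i j) - gb j‖ ^ 2
        ≤ (M : ℝ)⁻¹ * (4 * ∑ i, ‖x i j - xhat j‖ ^ 2
          + 2 * ∑ i, ‖g i (xhat j) - g i xs‖ ^ 2 + 4 * ∑ i, ‖g i xs‖ ^ 2) := hstep
      _ = 4 * ((M : ℝ)⁻¹ * ∑ i, ‖x i j - xhat j‖ ^ 2)
          + (2 * ((M : ℝ)⁻¹ * ∑ i, ‖g i (xhat j) - g i xs‖ ^ 2)
          + 4 * ((M : ℝ)⁻¹ * ∑ i, ‖g i xs‖ ^ 2)) := by ring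
  -- assemble
  set S := ∑ k ∈ Finset.Ico kp kq, V k with hS
  set Q := ∑ j ∈ Finset.Ico kp kq,
    (2 * ((M : ℝ)⁻¹ * ∑ i, ‖g i (xhat j) - g i xs‖ ^ 2) + 4 * σ2) with hQ
  set R := ∑ j ∈ Finset.Ico kp kq,
    (2 / (M : ℝ) * ∑ i, ‖g i (xhat j) - g i xs‖ ^ 2 + 6 * σ2) with hR
  have hSnn : 0 ≤ S := Finset.sum_nonneg fun k _ => hVnn k
  have hQnn : 0 ≤ Q := by
    apply Finset.sum_nonneg
    intro j _
    have : (0:ℝ) ≤ (M : ℝ)⁻¹ * ∑ i, ‖g i (xhat j) - g i xs‖ ^ 2 := by positivity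
    linarith
  have hQR : Q ≤ R := by
    apply Finset.sum_le_sum
    intro j _
    have h1 : 2 / (M : ℝ) * ∑ i, ‖g i (xhat j) - g i xs‖ ^ 2
        = 2 * ((M : ℝ)⁻¹ * ∑ i, ‖g i (xhat j) - g i xs‖ ^ 2) := by
      field_simp
    rw [h1]
    linarith
  -- main recursive bound
  have hmain : S ≤ l ^ 2 * ((H:ℝ) - 1) ^ 2 * (4 * S + Q) := by
    have hstep1 : S ≤ l ^ 2 * ((H:ℝ) - 1)
        * ∑ k ∈ Finset.Ico kp kq, ∑ j ∈ Finset.Ico kp k, D j := by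
      rw [hS, Finset.mul_sum]
      apply Finset.sum_le_sum
      intro k hkmem
      obtain ⟨h1, h2⟩ := Finset.mem_Ico.mp hkmem
      exact hVD k h1 h2
    have hstep2 : l ^ 2 * ((H:ℝ) - 1)
        * ∑ k ∈ Finset.Ico kp kq, ∑ j ∈ Finset.Ico kp k, D j
        ≤ l ^ 2 * ((H:ℝ) - 1) * (((H:ℝ) - 1) * ∑ j ∈ Finset.Ico kp kq, D j) := by
      apply mul_le_mul_of_nonneg_left hdouble (by positivity)
    have hstep3 : ∑ j ∈ Finset.Ico kp kq, D j ≤ 4 * S + Q := by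
      calc ∑ j ∈ Finset.Ico kp kq, D j
          ≤ ∑ j ∈ Finset.Ico kp kq, (4 * V j
            + (2 * ((M : ℝ)⁻¹ * ∑ i, ‖g i (xhat j) - g i xs‖ ^ 2) + 4 * σ2)) :=
            Finset.sum_le_sum fun j _ => hDbound j
        _ = 4 * S + Q := by
            rw [Finset.sum_add_distrib, hS, hQ, ← Finset.mul_sum]
    calc S ≤ l ^ 2 * ((H:ℝ) - 1)
        * ∑ k ∈ Finset.Ico kp kq, ∑ j ∈ Finset.Ico kp k, D j := hstep1
      _ ≤ l ^ 2 * ((H:ℝ) - 1) * (((H:ℝ) - 1) * ∑ j ∈ Finset.Ico kp kq, D j) := hstep2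
      _ = l ^ 2 * ((H:ℝ) - 1) ^ 2 * ∑ j ∈ Finset.Ico kp kq, D j := by ring
      _ ≤ l ^ 2 * ((H:ℝ) - 1) ^ 2 * (4 * S + Q) := by
          apply mul_le_mul_of_nonneg_left hstep3 (by positivity)
  -- smallness of l^2 (H-1)^2
  have hc : l ^ 2 * ((H:ℝ) - 1) ^ 2 ≤ 1 / 64 := by
    have hmaxpos : (0:ℝ) < max 1 ((H:ℝ) - 1) := lt_of_lt_of_le one_pos (le_max_left _ _)
    have hle : l * ((H:ℝ) - 1) ≤ 1 / 8 := by
      have h1 : l * ((H:ℝ) - 1) ≤ (1 / (8 * max 1 ((H:ℝ) - 1))) * max 1 ((H:ℝ) - 1) := by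
        apply mul_le_mul hl1 (le_max_right _ _) hH1 (by positivity)
      calc l * ((H:ℝ) - 1) ≤ (1 / (8 * max 1 ((H:ℝ) - 1))) * max 1 ((H:ℝ) - 1) := h1
        _ = 1 / 8 := by field_simp
    have hnn : 0 ≤ l * ((H:ℝ) - 1) := mul_nonneg hl0.le hH1
    calc l ^ 2 * ((H:ℝ) - 1) ^ 2 = (l * ((H:ℝ) - 1)) ^ 2 := by ring
      _ ≤ (1/8 : ℝ) ^ 2 := by apply pow_le_pow_left₀ hnn hle
      _ = 1 / 64 := by norm_num
  have hcnn : 0 ≤ l ^ 2 * ((H:ℝ) - 1) ^ 2 := by positivity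
  nlinarith [mul_nonneg (sub_nonneg.mpr hc) hSnn,
    mul_nonneg hcnn (sub_nonneg.mpr hQR), mul_nonneg hcnn hQnn]
end

section
/- Let T_1, ..., T_M be firmly nonexpansive operators on ℝ^d, g_i(x) = x − T_i(x), x⋆ a fixed point of 𝒯 = (1/M) Σ_{i=1}^M T_i, and σ² = (1/M) Σ_{i=1}^M ‖x⋆ − T_i(x⋆)‖². Let H ≥ 1 be an integer, let k_p < k_{p+1} be integers with k_{p+1} − k_p ≤ H, let λ satisfy 0 < λ ≤ 1/(8·max(1, H−1)), and let x_i^k ∈ ℝ^d for i = 1,...,M and k_p ≤ k ≤ k_{p+1}−1 satisfy: x_i^{k_p} = x̂^{k_p} for all i (where x̂^k = (1/M) Σ_{i=1}^M x_i^k), and x_i^{k+1} = x_i^k − λ g_i(x_i^k) for k_p ≤ k < k_{p+1}−1. Then, with V_k = (1/M) Σ_{i=1}^M ‖x_i^k − x̂^k‖², Σ_{k=k_p}^{k_{p+1}−1} ( −(1/2)λ(1−λ)(1/M) Σ_{i=1}^M ‖x̂^k − T_i(x̂^k) + T_i(x⋆) − x⋆‖² + λ(2−λ)V_k ) ≤ −(λ/3)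 Σ_{k=k_p}^{k_{p+1}−1} (1/M) Σ_{i=1}^M ‖x̂^k − T_i(x̂^k) + T_i(x⋆) − x⋆‖² + 12λ³(H−1)² Σ_{k=k_p}^{k_{p+1}−1} σ². -/
/-!
Since all agents start the epoch at their mean, the deviation `x_i^k - x̂^k` equals `-λ`
times the sum over `k_p ≤ j < k` of the centred residuals `g_i(x_i^j) - ḡ^j`. Cauchy–Schwarz,
together with the fact that centring does not increase the mean square, gives
`V_k ≤ λ² (k - k_p) Σ_j (1/M) Σ_i ‖g_i(x_i^j)‖²`. Firm nonexpansiveness makes each `g_i`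
nonexpansive, so splitting
`g_i(x_i^j) = (g_i(x_i^j) - g_i(x̂^j)) + (x̂^j - T_i x̂^j + T_i x⋆ - x⋆) + g_i(x⋆)`
bounds `‖g_i(x_i^j)‖²` by three times the sum of the squares of the three pieces. Summing over
the epoch, with `Σ_k (k - k_p) ≤ (H - 1)²`, yields `ΣV ≤ 3λ²(H-1)² (ΣV + ΣD + Σσ²)`, where `D_k`
is the mean of `‖x̂^k - T_i x̂^k + T_i x⋆ - x⋆‖²`. As `λ(H - 1) ≤ 1/8`, the `V`-terms are absorbed
and what remains is a linear inequality between the epoch sums.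
-/

open Finset

section Averages

variable {ι E : Type*} [Fintype ι]

noncomputable def mean [AddCommGroup E] [Module ℝ E] (a : ι → E) : E :=
  (Fintype.card ι : ℝ)⁻¹ • ∑ i, a i

noncomputable def meanSqNorm [SeminormedAddCommGroup E] (a : ι → E) : ℝ :=
  (Fintype.card ι : ℝ)⁻¹ * ∑ i, ‖a i‖ ^ 2

section Module

variable [AddCommGroup E] [Module ℝ E]

lemma mean_sub (a b : ι → E) : mean (fun i => a i - b i) = mean a - mean b := by
  simp only [mean, sum_sub_distrib, smul_sub]

lemma mean_smul (c : ℝ) (a : ι → E) : mean (fun i => c • a i) = c • mean a := by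
  simp only [mean, ← smul_sum, smul_comm c]

end Module

section Seminormed

variable [SeminormedAddCommGroup E]

lemma meanSqNorm_nonneg (a : ι → E) : 0 ≤ meanSqNorm a := by
  unfold meanSqNorm; positivity

lemma meanSqNorm_mono {a b : ι → E} (h : ∀ i, ‖a i‖ ≤ ‖b i‖) :
    meanSqNorm a ≤ meanSqNorm b := by
  unfold meanSqNorm
  gcongr with i
  exact h i

lemma meanSqNorm_smul [NormedSpace ℝ E] (c : ℝ) (a : ι → E) :
    meanSqNorm (fun i => c • a i) = c ^ 2 * meanSqNorm a := by
  simp only [meanSqNorm, norm_smul, mul_pow, Real.norm_eq_abs, sq_abs, ← mul_sum]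
  ring

lemma norm_sum_sq_le_card_mul {κ : Type*} (s : Finset κ) (v : κ → E) :
    ‖∑ j ∈ s, v j‖ ^ 2 ≤ #s * ∑ j ∈ s, ‖v j‖ ^ 2 :=
  (pow_le_pow_left₀ (norm_nonneg _) (norm_sum_le s v) 2).trans sq_sum_le_card_mul_sum_sq

lemma meanSqNorm_sum_le {κ : Type*} (s : Finset κ) (v : ι → κ → E) :
    meanSqNorm (fun i => ∑ j ∈ s, v i j) ≤ #s * ∑ j ∈ s, meanSqNorm (v · j) := by
  calc meanSqNorm (fun i => ∑ j ∈ s, v i j)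
      ≤ (Fintype.card ι : ℝ)⁻¹ * ∑ i, #s * ∑ j ∈ s, ‖v i j‖ ^ 2 := by
        unfold meanSqNorm
        gcongr with i
        exact norm_sum_sq_le_card_mul s (v i)
    _ = #s * ∑ j ∈ s, meanSqNorm (v · j) := by
        simp only [meanSqNorm, ← mul_sum]
        rw [sum_comm]
        ring

lemma meanSqNorm_add_add_le (a b c : ι → E) :
    meanSqNorm (fun i => a i + b i + c i)
      ≤ 3 * (meanSqNorm a + meanSqNorm b + meanSqNorm c) := by
  have h := meanSqNorm_sum_le univ (fun i => ![a i, b i, c i])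
  simp only [Fin.sum_univ_three, card_univ, Fintype.card_fin] at h
  exact_mod_cast h

end Seminormed

lemma meanSqNorm_sub_mean_le [NormedAddCommGroup E] [InnerProductSpace ℝ E]
    (a : ι → E) :
    meanSqNorm (fun i => a i - mean a) ≤ meanSqNorm a := by
  rcases isEmpty_or_nonempty ι with hι | hι
  · simp [meanSqNorm]
  have hM : (Fintype.card ι : ℝ) ≠ 0 := by positivity
  have hsum : ∑ i, a i = (Fintype.card ι : ℝ) • mean a := by
    rw [mean, smul_smul, mul_inv_cancel₀ hM, one_smul]
  have hexpand :
      ∑ i, ‖a i - mean a‖ ^ 2 = ∑ i, ‖a i‖ ^ 2 - Fintype.card ι * ‖mean a‖ ^ 2 := by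
    simp only [norm_sub_sq_real, sum_add_distrib, sum_sub_distrib, ← mul_sum, ← sum_inner,
      hsum, real_inner_smul_left, real_inner_self_eq_norm_sq, sum_const, card_univ,
      nsmul_eq_mul]
    ring
  unfold meanSqNorm
  rw [hexpand]
  gcongr
  exact sub_le_self _ (by positivity)

end Averages

lemma sum_range_succ_id_le_sq (n : ℕ) : ∑ i ∈ range (n + 1), i ≤ n ^ 2 := by
  have h := sum_range_id_mul_two (n + 1)
  simp only [Nat.add_sub_cancel] at h
  nlinarith [Nat.le_self_pow two_ne_zero n]

lemma sum_Ico_sub_le_sq {a b H : ℕ} (h : b - a ≤ H) :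
    ∑ k ∈ Ico a b, ((k - a : ℕ) : ℝ) ≤ ((H : ℝ) - 1) ^ 2 := by
  rw [sum_Ico_eq_sum_range]
  simp only [Nat.add_sub_cancel_left]
  rcases hn : b - a with _ | n
  · simp [sq_nonneg]
  rw [hn] at h
  calc ∑ i ∈ range (n + 1), (i : ℝ) ≤ ((n ^ 2 : ℕ) : ℝ) := by
        rw [← Nat.cast_sum, Nat.cast_le]
        exact sum_range_succ_id_le_sq n
    _ ≤ ((H : ℝ) - 1) ^ 2 := by
        push_cast
        gcongr
        have : (n : ℝ) + 1 ≤ H := by exact_mod_cast h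
        linarith

section LocalSteps

variable {ι E : Type*} [Fintype ι]

section Module

variable [AddCommGroup E] [Module ℝ E] {x u : ι → ℕ → E} {l : ℝ} {k₀ k₁ : ℕ}

lemma sub_mean_eq_neg_smul_sum (hinit : ∀ i, x i k₀ = mean (x · k₀))
    (hstep : ∀ k, k₀ ≤ k → k + 1 < k₁ → ∀ i, x i (k + 1) = x i k - l • u i k)
    {k : ℕ} (hk₀ : k₀ ≤ k) (hk₁ : k < k₁) (i : ι) :
    x i k - mean (x · k) = -l • ∑ j ∈ Ico k₀ k, (u i j - mean (u · j)) := by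
  induction k, hk₀ using Nat.le_induction generalizing i with
  | base => simp [hinit i]
  | succ k hk ih =>
    have hstep' : (x · (k + 1)) = fun i => x i k - l • u i k := funext (hstep k hk hk₁)
    rw [hstep', hstep k hk hk₁ i, mean_sub, mean_smul, sum_Ico_succ_top hk, smul_add,
      ← ih (by omega) i]
    module

end Module

variable [NormedAddCommGroup E] [InnerProductSpace ℝ E] {x u : ι → ℕ → E} {l : ℝ}
  {k₀ k₁ : ℕ}

lemma meanSqNorm_sub_mean_le_sum (hinit : ∀ i, x i k₀ = mean (x · k₀))
    (hstep : ∀ k, k₀ ≤ k → k + 1 < k₁ → ∀ i, x i (k + 1) = x i k - l • u i k)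
    {k : ℕ} (hk₀ : k₀ ≤ k) (hk₁ : k < k₁) :
    meanSqNorm (fun i => x i k - mean (x · k))
      ≤ l ^ 2 * (k - k₀ : ℕ) * ∑ j ∈ Ico k₀ k, meanSqNorm (u · j) := by
  calc meanSqNorm (fun i => x i k - mean (x · k))
      = l ^ 2 * meanSqNorm (fun i => ∑ j ∈ Ico k₀ k, (u i j - mean (u · j))) := by
        simp_rw [sub_mean_eq_neg_smul_sum hinit hstep hk₀ hk₁, meanSqNorm_smul, neg_sq]
    _ ≤ l ^ 2 * ((k - k₀ : ℕ)
          * ∑ j ∈ Ico k₀ k, meanSqNorm (fun i => u i j - mean (u · j))) := by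
        gcongr
        simpa using meanSqNorm_sum_le (Ico k₀ k) (fun i j => u i j - mean (u · j))
    _ ≤ l ^ 2 * (k - k₀ : ℕ) * ∑ j ∈ Ico k₀ k, meanSqNorm (u · j) := by
        rw [mul_assoc]
        gcongr with j
        exact meanSqNorm_sub_mean_le _

lemma sum_meanSqNorm_sub_mean_le (hinit : ∀ i, x i k₀ = mean (x · k₀))
    (hstep : ∀ k, k₀ ≤ k → k + 1 < k₁ → ∀ i, x i (k + 1) = x i k - l • u i k)
    {H : ℕ} (hH : k₁ - k₀ ≤ H) :
    ∑ k ∈ Ico k₀ k₁, meanSqNorm (fun i => x i k - mean (x · k))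
      ≤ l ^ 2 * ((H : ℝ) - 1) ^ 2 * ∑ k ∈ Ico k₀ k₁, meanSqNorm (u · k) := by
  set S := ∑ k ∈ Ico k₀ k₁, meanSqNorm (u · k)
  have hS : 0 ≤ S := sum_nonneg fun k _ => meanSqNorm_nonneg _
  calc ∑ k ∈ Ico k₀ k₁, meanSqNorm (fun i => x i k - mean (x · k))
      ≤ ∑ k ∈ Ico k₀ k₁, l ^ 2 * S * (k - k₀ : ℕ) := by
        refine sum_le_sum fun k hk => ?_
        rw [mem_Ico] at hk
        refine (meanSqNorm_sub_mean_le_sum hinit hstep hk.1 hk.2).trans ?_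
        rw [mul_right_comm]
        gcongr
        exact sum_le_sum_of_subset_of_nonneg (Ico_subset_Ico_right hk.2.le)
          fun j _ _ => meanSqNorm_nonneg _
    _ ≤ l ^ 2 * S * ((H : ℝ) - 1) ^ 2 := by
        rw [← mul_sum]
        gcongr
        exact sum_Ico_sub_le_sq hH
    _ = l ^ 2 * ((H : ℝ) - 1) ^ 2 * S := by ring

end LocalSteps

def FirmlyNonexpansive {E : Type*} [SeminormedAddCommGroup E] (T : E → E) : Prop :=
  ∀ x y, ‖T x - T y‖ ^ 2 ≤ ‖x - y‖ ^ 2 - ‖T x - x - T y + y‖ ^ 2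

lemma FirmlyNonexpansive.norm_residual_sub_le {E : Type*} [SeminormedAddCommGroup E]
    {T : E → E} (hT : FirmlyNonexpansive T) (x y : E) :
    ‖(x - T x) - (y - T y)‖ ≤ ‖x - y‖ := by
  have h : (x - T x) - (y - T y) = -(T x - x - T y + y) := by abel
  rw [h, norm_neg, ← pow_le_pow_iff_left₀ (norm_nonneg _) (norm_nonneg _) two_ne_zero]
  linarith [hT x y, sq_nonneg ‖T x - T y‖]

lemma meanSqNorm_residual_le {ι E : Type*} [Fintype ι] [SeminormedAddCommGroup E]
    {T : ι → E → E} (hT : ∀ i, FirmlyNonexpansive (T i)) (y : ι → E) (z w : E) :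
    meanSqNorm (fun i => y i - T i (y i))
      ≤ 3 * (meanSqNorm (fun i => y i - z) + meanSqNorm (fun i => z - T i z + T i w - w)
        + meanSqNorm (fun i => w - T i w)) := by
  have hsplit : (fun i => y i - T i (y i)) = fun i =>
      ((y i - T i (y i)) - (z - T i z)) + (z - T i z + T i w - w) + (w - T i w) := by
    funext i; abel
  rw [hsplit]
  refine (meanSqNorm_add_add_le _ _ _).trans ?_
  linarith [meanSqNorm_mono fun i => (hT i).norm_residual_sub_le (y i) z]

theorem sum_meanSqNorm_sub_mean_le_of_firmlyNonexpansive {ι E : Type*} [Fintype ι]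
    [NormedAddCommGroup E] [InnerProductSpace ℝ E] {T : ι → E → E}
    (hT : ∀ i, FirmlyNonexpansive (T i)) (xs : E) {x : ι → ℕ → E} {xhat : ℕ → E}
    (hxhat : ∀ k, xhat k = mean (x · k)) {l : ℝ} {k₀ k₁ H : ℕ} (hH : k₁ - k₀ ≤ H)
    (hinit : ∀ i, x i k₀ = xhat k₀)
    (hstep : ∀ k, k₀ ≤ k → k + 1 < k₁ → ∀ i,
      x i (k + 1) = x i k - l • (x i k - T i (x i k))) :
    ∑ k ∈ Ico k₀ k₁, meanSqNorm (fun i => x i k - xhat k)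
      ≤ 3 * (l ^ 2 * ((H : ℝ) - 1) ^ 2) * ∑ k ∈ Ico k₀ k₁,
          (meanSqNorm (fun i => x i k - xhat k)
            + meanSqNorm (fun i => xhat k - T i (xhat k) + T i xs - xs)
            + meanSqNorm (fun i => xs - T i xs)) := by
  simp only [hxhat] at hinit ⊢
  calc ∑ k ∈ Ico k₀ k₁, meanSqNorm (fun i => x i k - mean (x · k))
      ≤ l ^ 2 * ((H : ℝ) - 1) ^ 2
          * ∑ k ∈ Ico k₀ k₁, meanSqNorm (fun i => x i k - T i (x i k)) :=
        sum_meanSqNorm_sub_mean_le hinit hstep hH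
    _ ≤ _ := by
        rw [mul_assoc 3, mul_left_comm]
        gcongr
        rw [mul_sum]
        gcongr with k
        exact meanSqNorm_residual_le hT _ _ _

lemma sq_mul_sq_le_of_le_one_div_max {l h : ℝ} (hl0 : 0 ≤ l) (hh : -1 ≤ h)
    (hl : l ≤ 1 / (8 * max 1 h)) : l ^ 2 * h ^ 2 ≤ 1 / 64 ∧ l ≤ 1 / 8 := by
  have hm : 1 ≤ max 1 h := le_max_left _ _
  have hlm : l * max 1 h ≤ 1 / 8 := by
    rw [le_div_iff₀ (by positivity)] at hl
    linarith
  have habs : |h| ≤ max 1 h := abs_le.mpr ⟨by linarith, le_max_right _ _⟩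
  have hlh : |l * h| ≤ 1 / 8 := by
    rw [abs_mul, abs_of_nonneg hl0]
    exact (mul_le_mul_of_nonneg_left habs hl0).trans hlm
  constructor
  · rw [← mul_pow, ← sq_abs]
    nlinarith [abs_nonneg (l * h)]
  · nlinarith

lemma epoch_inequality_of_deviation_bound {l h SD SV Sσ : ℝ} (hl0 : 0 ≤ l) (hl : l ≤ 1 / 8)
    (hlh : l ^ 2 * h ^ 2 ≤ 1 / 64) (hSD : 0 ≤ SD) (hSV : 0 ≤ SV) (hSσ : 0 ≤ Sσ)
    (hdev : SV ≤ 3 * (l ^ 2 * h ^ 2) * (SV + SD + Sσ)) :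
    -(1 / 2) * l * (1 - l) * SD + l * (2 - l) * SV
      ≤ -(l / 3) * SD + 12 * l ^ 3 * h ^ 2 * Sσ := by
  have hc0 : 0 ≤ l ^ 2 * h ^ 2 := by positivity
  rw [show 12 * l ^ 3 * h ^ 2 = 12 * l * (l ^ 2 * h ^ 2) by ring]
  generalize l ^ 2 * h ^ 2 = c at hc0 hlh hdev ⊢
  -- absorbing the `SV` on the right of `hdev` costs a factor `1 - 3c ≥ 61/64`
  have hSV' : 61 * SV ≤ 192 * c * (SD + Sσ) := by nlinarith
  nlinarith [mul_nonneg hl0 hSD, mul_nonneg hl0 hSσ, mul_nonneg (mul_nonneg hl0 hl0) hSV,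
    mul_nonneg hl0 (mul_nonneg hc0 hSD)]

theorem stmt_13_general (d M : ℕ)
    (T : Fin M → EuclideanSpace ℝ (Fin d) → EuclideanSpace ℝ (Fin d))
    (hT : ∀ i, ∀ x y, ‖T i x - T i y‖ ^ 2
      ≤ ‖x - y‖ ^ 2 - ‖T i x - x - T i y + y‖ ^ 2)
    (g : Fin M → EuclideanSpace ℝ (Fin d) → EuclideanSpace ℝ (Fin d))
    (hg : ∀ i x, g i x = x - T i x)
    (xs : EuclideanSpace ℝ (Fin d))
    (σ2 : ℝ) (hσ2 : σ2 = (M : ℝ)⁻¹ * ∑ i, ‖xs - T i xs‖ ^ 2)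
    (H : ℕ)
    (kp kq : ℕ) (hkH : kq - kp ≤ H)
    (l : ℝ) (hl0 : 0 < l) (hl1 : l ≤ 1 / (8 * max 1 ((H : ℝ) - 1)))
    (x : Fin M → ℕ → EuclideanSpace ℝ (Fin d))
    (xhat : ℕ → EuclideanSpace ℝ (Fin d))
    (hxhat : ∀ k, xhat k = (M : ℝ)⁻¹ • ∑ i, x i k)
    (hinit : ∀ i, x i kp = xhat kp)
    (hrec : ∀ k, kp ≤ k → k + 1 < kq → ∀ i, x i (k + 1) = x i k - l • g i (x i k))
    (V : ℕ → ℝ) (hV : ∀ k, V k = (M : ℝ)⁻¹ * ∑ i, ‖x i k - xhat k‖ ^ 2) :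
    ∑ k ∈ Finset.Ico kp kq,
        (-(1 / 2) * l * (1 - l)
            * ((M : ℝ)⁻¹ * ∑ i, ‖xhat k - T i (xhat k) + T i xs - xs‖ ^ 2)
          + l * (2 - l) * V k)
      ≤ -(l / 3) * ∑ k ∈ Finset.Ico kp kq,
            (M : ℝ)⁻¹ * ∑ i, ‖xhat k - T i (xhat k) + T i xs - xs‖ ^ 2
        + 12 * l ^ 3 * ((H : ℝ) - 1) ^ 2 * ∑ _k ∈ Finset.Ico kp kq, σ2 := by
  obtain rfl : g = fun i y => y - T i y := funext₂ hg
  have hmean : ∀ k, xhat k = mean (x · k) := by simpa [mean] using hxhat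
  have hV' : ∀ k, V k = meanSqNorm (fun i => x i k - xhat k) := by simp [meanSqNorm, hV]
  have hσ2' : σ2 = meanSqNorm (fun i => xs - T i xs) := by simp [meanSqNorm, hσ2]
  have hD : ∀ k, (M : ℝ)⁻¹ * ∑ i, ‖xhat k - T i (xhat k) + T i xs - xs‖ ^ 2
      = meanSqNorm (fun i => xhat k - T i (xhat k) + T i xs - xs) := by simp [meanSqNorm]
  have hdev := sum_meanSqNorm_sub_mean_le_of_firmlyNonexpansive hT xs hmean hkH hinit hrec
  obtain ⟨hlh, hl8⟩ := sq_mul_sq_le_of_le_one_div_max hl0.le (by simp) hl1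
  simp only [hD, hV', hσ2', sum_add_distrib] at hdev ⊢
  rw [← mul_sum, ← mul_sum]
  exact epoch_inequality_of_deviation_bound hl0.le hl8 hlh
    (sum_nonneg fun _ _ => meanSqNorm_nonneg _) (sum_nonneg fun _ _ => meanSqNorm_nonneg _)
    (sum_nonneg fun _ _ => meanSqNorm_nonneg _) hdev

/-- key estimate combining the descent term and the summed
deviation V_k over an epoch. -/
theorem stmt_13 (d M : ℕ) (hM : 0 < M)
    (T : Fin M → EuclideanSpace ℝ (Fin d) → EuclideanSpace ℝ (Fin d))
    (hT : ∀ i, ∀ x y, ‖T i x - T i y‖ ^ 2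
      ≤ ‖x - y‖ ^ 2 - ‖T i x - x - T i y + y‖ ^ 2)
    (g : Fin M → EuclideanSpace ℝ (Fin d) → EuclideanSpace ℝ (Fin d))
    (hg : ∀ i x, g i x = x - T i x)
    (xs : EuclideanSpace ℝ (Fin d)) (hxs : (M : ℝ)⁻¹ • ∑ i, T i xs = xs)
    (σ2 : ℝ) (hσ2 : σ2 = (M : ℝ)⁻¹ * ∑ i, ‖xs - T i xs‖ ^ 2)
    (H : ℕ) (hH : 1 ≤ H)
    (kp kq : ℕ) (hk : kp < kq) (hkH : kq - kp ≤ H)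
    (l : ℝ) (hl0 : 0 < l) (hl1 : l ≤ 1 / (8 * max 1 ((H : ℝ) - 1)))
    (x : Fin M → ℕ → EuclideanSpace ℝ (Fin d))
    (xhat : ℕ → EuclideanSpace ℝ (Fin d))
    (hxhat : ∀ k, xhat k = (M : ℝ)⁻¹ • ∑ i, x i k)
    (hinit : ∀ i, x i kp = xhat kp)
    (hrec : ∀ k, kp ≤ k → k + 1 < kq → ∀ i, x i (k + 1) = x i k - l • g i (x i k))
    (V : ℕ → ℝ) (hV : ∀ k, V k = (M : ℝ)⁻¹ * ∑ i, ‖x i k - xhat k‖ ^ 2) :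
    ∑ k ∈ Finset.Ico kp kq,
        (-(1 / 2) * l * (1 - l)
            * ((M : ℝ)⁻¹ * ∑ i, ‖xhat k - T i (xhat k) + T i xs - xs‖ ^ 2)
          + l * (2 - l) * V k)
      ≤ -(l / 3) * ∑ k ∈ Finset.Ico kp kq,
            (M : ℝ)⁻¹ * ∑ i, ‖xhat k - T i (xhat k) + T i xs - xs‖ ^ 2
        + 12 * l ^ 3 * ((H : ℝ) - 1) ^ 2 * ∑ _k ∈ Finset.Ico kp kq, σ2 :=
  stmt_13_general d M T hT g hg xs σ2 hσ2 H kp kq hkH l hl0 hl1 x xhat hxhat hinit hrec V hV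
end

section
/- Let T_1, ..., T_M be firmly nonexpansive operators on ℝ^d, let 𝒯 = (1/M) Σ_{i=1}^M T_i, let g_i(x) = x − T_i(x), let x⋆ be a fixed point of 𝒯, and let σ = sqrt((1/M) Σ_{i=1}^M ‖x⋆ − T_i(x⋆)‖²) > 0. Let H ≥ 2 be an integer, let 0 = t_0 < t_1 < ... be integers with t_n − t_{n−1} ≤ H, let ε > 0, and set λ = min{ 1/(8(H−1)), √ε/(6√2 (H−1)σ) }. Run Algorithm 1: x_i^0 = x̂^0; h_i^{k+1} = x_i^k − λ g_i(x_i^k); x_i^{k+1} = (1/M) Σ_j h_j^{k+1} if k+1 = t_n for some n, else x_i^{k+1} = h_i^{k+1}; x̂^k = (1/M) Σ_i x_i^k. Then for every integer T ≥ 1 with T/(H−1) ≥ (24‖x̂^0 − x⋆‖²/ε) · max{2, 3σ/√(2ε)}, one has (1/T) Σ_{k=0}^{T−1} ‖x̂^k − 𝒯(x̂^k)‖² ≤ ε. -/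
open Finset RealInnerProductSpace

section helpers
variable {E : Type*} [NormedAddCommGroup E] [InnerProductSpace ℝ E]

lemma coco (x y Tx Ty : E)
    (h : ‖Tx - Ty‖ ^ 2 ≤ ‖x - y‖ ^ 2 - ‖Tx - x - Ty + y‖ ^ 2) :
    ‖(x - Tx) - (y - Ty)‖ ^ 2 ≤ ⟪(x - Tx) - (y - Ty), x - y⟫ := by
  have h1 : Tx - Ty = (x - y) - ((x - Tx) - (y - Ty)) := by abel
  have h2 : Tx - x - Ty + y = -((x - Tx) - (y - Ty)) := by abel
  rw [h1, h2, norm_neg, norm_sub_sq_real] at h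
  have h3 := real_inner_comm ((x - Tx) - (y - Ty)) (x - y)
  linarith

lemma coco_lip (x y Tx Ty : E)
    (h : ‖Tx - Ty‖ ^ 2 ≤ ‖x - y‖ ^ 2 - ‖Tx - x - Ty + y‖ ^ 2) :
    ‖(x - Tx) - (y - Ty)‖ ≤ ‖x - y‖ := by
  have h1 := coco x y Tx Ty h
  have h2 := real_inner_le_norm ((x - Tx) - (y - Ty)) (x - y)
  rcases eq_or_lt_of_le (norm_nonneg ((x - Tx) - (y - Ty))) with h3 | h3
  · rw [← h3]; exact norm_nonneg _
  · nlinarith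

lemma jensen_norm {ι : Type*} (s : Finset ι) (v : ι → E) :
    ‖∑ i ∈ s, v i‖ ^ 2 ≤ #s * ∑ i ∈ s, ‖v i‖ ^ 2 := by
  calc ‖∑ i ∈ s, v i‖ ^ 2 ≤ (∑ i ∈ s, ‖v i‖) ^ 2 := by
        have := norm_sum_le s v
        nlinarith [norm_nonneg (∑ i ∈ s, v i), sum_nonneg fun i (_ : i ∈ s) => norm_nonneg (v i)]
    _ ≤ #s * ∑ i ∈ s, ‖v i‖ ^ 2 := sq_sum_le_card_mul_sum_sq

end helpers

lemma double_count (f : ℕ → ℝ) (hf : ∀ j, 0 ≤ f j) (N h : ℕ) :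
    ∑ k ∈ range N, ∑ j ∈ Ico (k - h) k, f j ≤ h * ∑ j ∈ range N, f j := by
  have key : ∀ k ∈ range N, ∑ j ∈ Ico (k - h) k, f j
      = ∑ j ∈ range N, if j ∈ Ico (k - h) k then f j else 0 := by
    intro k hk
    rw [Finset.sum_ite_mem, Finset.inter_eq_right.2]
    intro j hj
    simp only [mem_Ico] at hj
    simp only [mem_range] at hk ⊢
    omega
  rw [Finset.sum_congr rfl key, Finset.sum_comm]
  have perj : ∀ j ∈ range N, ∑ k ∈ range N, (if j ∈ Ico (k - h) k then f j else 0) ≤ h * f j := by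
    intro j _
    calc ∑ k ∈ range N, (if j ∈ Ico (k - h) k then f j else 0)
        ≤ ∑ k ∈ range N, (if k ∈ Ioc j (j + h) then f j else 0) := by
          apply Finset.sum_le_sum
          intro k _
          by_cases hc : j ∈ Ico (k - h) k
          · simp only [mem_Ico] at hc
            have : k ∈ Ioc j (j + h) := by simp only [mem_Ioc]; omega
            simp [hc, this]
          · simp only [hc, if_false]
            split <;> simp [hf j]
      _ = ∑ k ∈ range N ∩ Ioc j (j + h), f j := Finset.sum_ite_mem _ _ _
      _ ≤ h * f j := by
          rw [Finset.sum_const, nsmul_eq_mul]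
          apply mul_le_mul_of_nonneg_right _ (hf j)
          have h1 : #(range N ∩ Ioc j (j + h)) ≤ #(Ioc j (j + h)) :=
            Finset.card_le_card (Finset.inter_subset_right)
          rw [Nat.card_Ioc] at h1
          have h2 : #(range N ∩ Ioc j (j + h)) ≤ h := by omega
          exact_mod_cast h2
  calc ∑ j ∈ range N, ∑ k ∈ range N, (if j ∈ Ico (k - h) k then f j else 0)
      ≤ ∑ j ∈ range N, h * f j := Finset.sum_le_sum perj
    _ = h * ∑ j ∈ range N, f j := by rw [Finset.mul_sum]

set_option maxHeartbeats 16000000 in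
/-- Corollary 1: iteration complexity of Algorithm 1 to reach
ε-accuracy. -/
theorem stmt_15 (d M : ℕ) (hM : 0 < M)
    (A : Fin M → EuclideanSpace ℝ (Fin d) → EuclideanSpace ℝ (Fin d))
    (hA : ∀ i, ∀ x y, ‖A i x - A i y‖ ^ 2
      ≤ ‖x - y‖ ^ 2 - ‖A i x - x - A i y + y‖ ^ 2)
    (g : Fin M → EuclideanSpace ℝ (Fin d) → EuclideanSpace ℝ (Fin d))
    (hg : ∀ i x, g i x = x - A i x)
    (xs : EuclideanSpace ℝ (Fin d)) (hxs : (M : ℝ)⁻¹ • ∑ i, A i xs = xs)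
    (σ : ℝ) (hσ : σ = Real.sqrt ((M : ℝ)⁻¹ * ∑ i, ‖xs - A i xs‖ ^ 2))
    (hσpos : 0 < σ)
    (H : ℕ) (hH : 2 ≤ H)
    (t : ℕ → ℕ) (ht0 : t 0 = 0) (htmono : StrictMono t)
    (htH : ∀ n : ℕ, t (n + 1) - t n ≤ H)
    (ε : ℝ) (hε : 0 < ε)
    (l : ℝ) (hl : l = min (1 / (8 * ((H : ℝ) - 1)))
      (Real.sqrt ε / (6 * Real.sqrt 2 * ((H : ℝ) - 1) * σ)))
    (x : Fin M → ℕ → EuclideanSpace ℝ (Fin d))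
    (x0 : EuclideanSpace ℝ (Fin d)) (hinit : ∀ i, x i 0 = x0)
    (hrecC : ∀ k : ℕ, (∃ n, k + 1 = t n) → ∀ i,
      x i (k + 1) = (M : ℝ)⁻¹ • ∑ j, (x j k - l • g j (x j k)))
    (hrecN : ∀ k : ℕ, (¬ ∃ n, k + 1 = t n) → ∀ i,
      x i (k + 1) = x i k - l • g i (x i k))
    (xhat : ℕ → EuclideanSpace ℝ (Fin d))
    (hxhat : ∀ k, xhat k = (M : ℝ)⁻¹ • ∑ i, x i k) :
    ∀ N : ℕ, 1 ≤ N →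
      (N : ℝ) / ((H : ℝ) - 1)
          ≥ 24 * ‖x0 - xs‖ ^ 2 / ε * max 2 (3 * σ / Real.sqrt (2 * ε)) →
      (N : ℝ)⁻¹ * ∑ k ∈ Finset.range N,
          ‖xhat k - (M : ℝ)⁻¹ • ∑ i, A i (xhat k)‖ ^ 2 ≤ ε := by
  intro N hN hcond
  have hm : (0:ℝ) < (M:ℝ) := by exact_mod_cast hM
  have hH2 : (2:ℝ) ≤ (H:ℝ) := by exact_mod_cast hH
  have hh1 : (1:ℝ) ≤ (H:ℝ) - 1 := by linarith
  have hhcast : (((H - 1 : ℕ)):ℝ) = (H:ℝ) - 1 := by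
    have : 1 ≤ H := by omega
    push_cast [this]
    ring
  -- λ bounds
  have hhpos : (0:ℝ) < (H:ℝ) - 1 := by linarith
  have hsqε : (0:ℝ) < Real.sqrt ε := Real.sqrt_pos.2 hε
  have hsq2 : (0:ℝ) < Real.sqrt 2 := by positivity
  have hlpos : 0 < l := by
    rw [hl]
    apply lt_min
    · positivity
    · positivity
  have hlh : l * ((H:ℝ) - 1) ≤ 1 / 8 := by
    have h1 : l ≤ 1 / (8 * ((H:ℝ) - 1)) := hl ▸ min_le_left _ _
    rw [le_div_iff₀ (by positivity)] at h1
    nlinarith [h1]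
  have hl18 : l ≤ 1 / 8 := by nlinarith
  have hq64 : (l * ((H:ℝ) - 1)) ^ 2 ≤ 1 / 64 := by
    nlinarith [mul_pos hlpos hhpos, hlh]
  have hqσ : (l * ((H:ℝ) - 1)) ^ 2 * σ ^ 2 ≤ ε / 72 := by
    have h1 : l ≤ Real.sqrt ε / (6 * Real.sqrt 2 * ((H:ℝ) - 1) * σ) := hl ▸ min_le_right _ _
    rw [le_div_iff₀ (by positivity)] at h1
    have h2 : l * ((H:ℝ) - 1) * σ * (6 * Real.sqrt 2) ≤ Real.sqrt ε := by nlinarith [h1]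
    have h3 : (Real.sqrt ε) ^ 2 = ε := Real.sq_sqrt hε.le
    have h4 : (Real.sqrt 2) ^ 2 = 2 := Real.sq_sqrt (by norm_num)
    have h5 : (0:ℝ) ≤ l * ((H:ℝ) - 1) * σ * (6 * Real.sqrt 2) := by positivity
    have h6 := pow_le_pow_left₀ h5 h2 2
    rw [h3] at h6
    have h7 : (l * ((H:ℝ) - 1) * σ * (6 * Real.sqrt 2)) ^ 2
        = (l * ((H:ℝ) - 1)) ^ 2 * σ ^ 2 * (36 * (Real.sqrt 2) ^ 2) := by ring
    rw [h7, h4] at h6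
    linarith
  -- basic vector facts
  have havg : ∀ c : EuclideanSpace ℝ (Fin d), (M:ℝ)⁻¹ • ∑ _i : Fin M, c = c := by
    intro c
    rw [Finset.sum_const, card_univ, Fintype.card_fin, ← Nat.cast_smul_eq_nsmul ℝ,
      smul_smul, inv_mul_cancel₀ hm.ne', one_smul]
  have hA_sum : ∑ i, A i xs = (M:ℝ) • xs := by
    have h1 := congrArg (fun z => (M:ℝ) • z) hxs
    simpa [smul_smul, mul_inv_cancel₀ hm.ne'] using h1
  have hsumgs : ∑ i, g i xs = 0 := by
    simp only [hg]
    rw [Finset.sum_sub_distrib, hA_sum]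
    have h1 : (∑ _i : Fin M, xs) = (M:ℝ) • xs := by
      rw [Finset.sum_const, card_univ, Fintype.card_fin, ← Nat.cast_smul_eq_nsmul ℝ]
    rw [h1, sub_self]
  have havgnorm : ∀ v : Fin M → EuclideanSpace ℝ (Fin d),
      ‖(M:ℝ)⁻¹ • ∑ i, v i‖ ^ 2 ≤ (M:ℝ)⁻¹ * ∑ i, ‖v i‖ ^ 2 := by
    intro v
    have h1 := jensen_norm Finset.univ v
    rw [card_univ, Fintype.card_fin] at h1
    have h2 : ‖(M:ℝ)⁻¹ • ∑ i, v i‖ ^ 2 = ((M:ℝ)⁻¹) ^ 2 * ‖∑ i, v i‖ ^ 2 := by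
      rw [norm_smul, mul_pow, Real.norm_eq_abs, sq_abs]
    rw [h2]
    calc ((M:ℝ)⁻¹) ^ 2 * ‖∑ i, v i‖ ^ 2
        ≤ ((M:ℝ)⁻¹) ^ 2 * ((M:ℝ) * ∑ i, ‖v i‖ ^ 2) :=
          mul_le_mul_of_nonneg_left h1 (sq_nonneg _)
      _ = (M:ℝ)⁻¹ * ∑ i, ‖v i‖ ^ 2 := by
          field_simp
  have hσ2 : σ ^ 2 = (M:ℝ)⁻¹ * ∑ i, ‖g i xs‖ ^ 2 := by
    have hnn : (0:ℝ) ≤ (M:ℝ)⁻¹ * ∑ i, ‖xs - A i xs‖ ^ 2 :=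
      mul_nonneg (inv_nonneg.2 hm.le) (Finset.sum_nonneg fun i _ => sq_nonneg _)
    rw [hσ, Real.sq_sqrt hnn]
    congr 1
    apply Finset.sum_congr rfl
    intro i _
    rw [hg]
  have hco : ∀ i a b, ‖g i a - g i b‖ ^ 2 ≤ ⟪g i a - g i b, a - b⟫ := by
    intro i a b
    simp only [hg]
    exact coco a b (A i a) (A i b) (hA i a b)
  have hlip : ∀ i a b, ‖g i a - g i b‖ ≤ ‖a - b‖ := by
    intro i a b
    simp only [hg]
    exact coco_lip a b (A i a) (A i b) (hA i a b)
  -- step recursion for the average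
  have hstep : ∀ k, xhat (k+1) = xhat k - l • ((M:ℝ)⁻¹ • ∑ i, g i (x i k)) := by
    intro k
    have hcommon : (M:ℝ)⁻¹ • ∑ j, (x j k - l • g j (x j k))
        = xhat k - l • ((M:ℝ)⁻¹ • ∑ i, g i (x i k)) := by
      rw [Finset.sum_sub_distrib, smul_sub, hxhat k]
      congr 1
      rw [← Finset.smul_sum, smul_comm]
    by_cases hsync : ∃ n, k + 1 = t n
    · rw [hxhat (k+1)]
      have h1 : ∀ i : Fin M, x i (k+1) = (M:ℝ)⁻¹ • ∑ j, (x j k - l • g j (x j k)) :=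
        hrecC k hsync
      calc (M:ℝ)⁻¹ • ∑ i, x i (k+1)
          = (M:ℝ)⁻¹ • ∑ _i : Fin M, ((M:ℝ)⁻¹ • ∑ j, (x j k - l • g j (x j k))) := by
            rw [Finset.sum_congr rfl fun i _ => h1 i]
        _ = (M:ℝ)⁻¹ • ∑ j, (x j k - l • g j (x j k)) := havg _
        _ = _ := hcommon
    · rw [hxhat (k+1)]
      rw [Finset.sum_congr rfl fun i _ => hrecN k hsync i]
      exact hcommon
  have hgbarΔ : ∀ k, (M:ℝ)⁻¹ • ∑ i, g i (x i k)
      = (M:ℝ)⁻¹ • ∑ i, (g i (x i k) - g i xs) := by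
    intro k
    rw [Finset.sum_sub_distrib, hsumgs, sub_zero]
  -- named sequences
  set S : ℕ → ℝ := fun k => (M:ℝ)⁻¹ * ∑ i, ‖g i (x i k) - g i xs‖ ^ 2 with hSdef
  set D : ℕ → ℝ := fun k => (M:ℝ)⁻¹ * ∑ i, ‖x i k - xhat k‖ ^ 2 with hDdef
  set w : ℕ → EuclideanSpace ℝ (Fin d) := fun k => (M:ℝ)⁻¹ • ∑ i, (g i (x i k) - g i xs)
    with hwdef
  have hS0 : ∀ k, 0 ≤ S k := by
    intro k
    simp only [hSdef]
    exact mul_nonneg (inv_nonneg.2 hm.le) (Finset.sum_nonneg fun i _ => sq_nonneg _)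
  have hD0 : ∀ k, 0 ≤ D k := by
    intro k
    simp only [hDdef]
    exact mul_nonneg (inv_nonneg.2 hm.le) (Finset.sum_nonneg fun i _ => sq_nonneg _)
  have hw2 : ∀ k, ‖w k‖ ^ 2 ≤ S k := by
    intro k
    simp only [hwdef, hSdef]
    exact havgnorm _
  have hstep' : ∀ k, xhat (k+1) = xhat k - l • w k := by
    intro k
    rw [hstep k, hgbarΔ k]
  -- descent inequality
  have hdesc : ∀ k, ‖xhat (k+1) - xs‖ ^ 2
      ≤ ‖xhat k - xs‖ ^ 2 - (11/8) * l * S k + 2 * l * D k := by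
    intro k
    have hsub : xhat (k+1) - xs = (xhat k - xs) - l • w k := by
      rw [hstep' k]
      abel
    have hexp : ‖xhat (k+1) - xs‖ ^ 2
        = ‖xhat k - xs‖ ^ 2 - 2 * (l * ⟪xhat k - xs, w k⟫) + l ^ 2 * ‖w k‖ ^ 2 := by
      rw [hsub, norm_sub_sq_real, real_inner_smul_right]
      congr 1
      rw [norm_smul, Real.norm_eq_abs, mul_pow, sq_abs]
    have hinner : (3/4) * S k - D k ≤ ⟪xhat k - xs, w k⟫ := by
      have hper : ∀ i : Fin M,
          (3/4) * ‖g i (x i k) - g i xs‖ ^ 2 - ‖x i k - xhat k‖ ^ 2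
          ≤ ⟪xhat k - xs, g i (x i k) - g i xs⟫ := by
        intro i
        have e1 : ⟪xhat k - xs, g i (x i k) - g i xs⟫
            = ⟪g i (x i k) - g i xs, x i k - xs⟫
              - ⟪g i (x i k) - g i xs, x i k - xhat k⟫ := by
          rw [real_inner_comm, ← inner_sub_right]
          congr 1
          abel
        have e2 := hco i (x i k) xs
        have e3 := real_inner_le_norm (g i (x i k) - g i xs) (x i k - xhat k)
        have e4 : ‖g i (x i k) - g i xs‖ * ‖x i k - xhat k‖
            ≤ (1/4) * ‖g i (x i k) - g i xs‖ ^ 2 + ‖x i k - xhat k‖ ^ 2 := by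
          nlinarith [sq_nonneg (‖g i (x i k) - g i xs‖ - 2 * ‖x i k - xhat k‖)]
        rw [e1]
        linarith
      have hsum := Finset.sum_le_sum fun i (_ : i ∈ Finset.univ) => hper i
      have e5 : ⟪xhat k - xs, w k⟫
          = (M:ℝ)⁻¹ * ∑ i, ⟪xhat k - xs, g i (x i k) - g i xs⟫ := by
        simp only [hwdef]
        rw [real_inner_smul_right, inner_sum]
      have e6 : ∑ i : Fin M, ((3/4) * ‖g i (x i k) - g i xs‖ ^ 2 - ‖x i k - xhat k‖ ^ 2)
          = (3/4) * (∑ i, ‖g i (x i k) - g i xs‖ ^ 2) - ∑ i, ‖x i k - xhat k‖ ^ 2 := by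
        rw [Finset.sum_sub_distrib, Finset.mul_sum]
      rw [e5]
      simp only [hSdef, hDdef]
      have e7 := mul_le_mul_of_nonneg_left hsum (inv_nonneg.2 hm.le)
      rw [e6] at e7
      nlinarith [e7]
    rw [hexp]
    nlinarith [hw2 k, hinner, hlpos, hl18, hS0 k,
      mul_le_mul_of_nonneg_left hinner (by linarith : (0:ℝ) ≤ 2 * l),
      mul_le_mul_of_nonneg_left (hw2 k) (sq_nonneg l),
      mul_nonneg hlpos.le (hS0 k)]
  -- noise bound
  have hnoise : ∀ k, (M:ℝ)⁻¹ * ∑ i, ‖g i (x i k) - w k‖ ^ 2 ≤ 6 * S k + 3 * σ ^ 2 := by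
    intro k
    have hper : ∀ i : Fin M, ‖g i (x i k) - w k‖ ^ 2
        ≤ 3 * ‖g i (x i k) - g i xs‖ ^ 2 + 3 * ‖g i xs‖ ^ 2 + 3 * ‖w k‖ ^ 2 := by
      intro i
      have e1 : g i (x i k) - w k = (g i (x i k) - g i xs) + g i xs + -(w k) := by abel
      have e2 : ‖g i (x i k) - w k‖ ≤ ‖g i (x i k) - g i xs‖ + ‖g i xs‖ + ‖w k‖ := by
        calc ‖g i (x i k) - w k‖ = ‖(g i (x i k) - g i xs) + g i xs + -(w k)‖ := by rw [e1]
          _ ≤ ‖g i (x i k) - g i xs‖ + ‖g i xs‖ + ‖-(w k)‖ := norm_add₃_le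
          _ = ‖g i (x i k) - g i xs‖ + ‖g i xs‖ + ‖w k‖ := by rw [norm_neg]
      nlinarith [e2, norm_nonneg (g i (x i k) - w k), norm_nonneg (g i (x i k) - g i xs),
        norm_nonneg (g i xs), norm_nonneg (w k),
        sq_nonneg (‖g i (x i k) - g i xs‖ - ‖g i xs‖),
        sq_nonneg (‖g i (x i k) - g i xs‖ - ‖w k‖),
        sq_nonneg (‖g i xs‖ - ‖w k‖)]
    have hsum := Finset.sum_le_sum fun i (_ : i ∈ Finset.univ) => hper i
    have e3 : ∑ i : Fin M, (3 * ‖g i (x i k) - g i xs‖ ^ 2 + 3 * ‖g i xs‖ ^ 2 + 3 * ‖w k‖ ^ 2)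
        = 3 * (∑ i, ‖g i (x i k) - g i xs‖ ^ 2) + 3 * (∑ i, ‖g i xs‖ ^ 2)
          + (M:ℝ) * (3 * ‖w k‖ ^ 2) := by
      rw [Finset.sum_add_distrib, Finset.sum_add_distrib, Finset.sum_const, card_univ,
        Fintype.card_fin, nsmul_eq_mul, Finset.mul_sum, Finset.mul_sum]
    have e4 := mul_le_mul_of_nonneg_left hsum (inv_nonneg.2 hm.le)
    rw [e3] at e4
    have e5 : (M:ℝ)⁻¹ * (3 * (∑ i, ‖g i (x i k) - g i xs‖ ^ 2)
        + 3 * (∑ i, ‖g i xs‖ ^ 2) + (M:ℝ) * (3 * ‖w k‖ ^ 2))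
        = 3 * S k + 3 * σ ^ 2 + 3 * ‖w k‖ ^ 2 := by
      rw [hσ2]
      simp only [hSdef]
      field_simp
    rw [e5] at e4
    have := hw2 k
    linarith
  -- fixed-point residual bound
  have hFb : ∀ k, ‖xhat k - (M:ℝ)⁻¹ • ∑ i, A i (xhat k)‖ ^ 2 ≤ 2 * S k + 2 * D k := by
    intro k
    have e0 : ∀ i : Fin M, g i (xhat k)
        = (g i (xhat k) - g i (x i k)) + ((g i (x i k) - g i xs) + g i xs) := by
      intro i
      abel
    have e2 : ∑ i, g i (xhat k)
        = ∑ i, (g i (xhat k) - g i (x i k)) + ∑ i, (g i (x i k) - g i xs) := by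
      rw [Finset.sum_congr rfl fun i _ => e0 i, Finset.sum_add_distrib,
        Finset.sum_add_distrib, hsumgs, add_zero]
    have e4 : (M:ℝ)⁻¹ • ∑ i, g i (xhat k) = xhat k - (M:ℝ)⁻¹ • ∑ i, A i (xhat k) := by
      simp only [hg]
      rw [Finset.sum_sub_distrib, smul_sub, havg]
    have e1 : xhat k - (M:ℝ)⁻¹ • ∑ i, A i (xhat k)
        = (M:ℝ)⁻¹ • ∑ i, (g i (xhat k) - g i (x i k)) + w k := by
      rw [← e4, e2, smul_add]
    have e5 : ‖xhat k - (M:ℝ)⁻¹ • ∑ i, A i (xhat k)‖ ^ 2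
        ≤ 2 * ‖(M:ℝ)⁻¹ • ∑ i, (g i (xhat k) - g i (x i k))‖ ^ 2 + 2 * ‖w k‖ ^ 2 := by
      rw [e1]
      nlinarith [norm_add_le ((M:ℝ)⁻¹ • ∑ i, (g i (xhat k) - g i (x i k))) (w k),
        norm_nonneg ((M:ℝ)⁻¹ • ∑ i, (g i (xhat k) - g i (x i k)) + w k),
        norm_nonneg ((M:ℝ)⁻¹ • ∑ i, (g i (xhat k) - g i (x i k))), norm_nonneg (w k),
        sq_nonneg (‖(M:ℝ)⁻¹ • ∑ i, (g i (xhat k) - g i (x i k))‖ - ‖w k‖)]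
    have e6 : ‖(M:ℝ)⁻¹ • ∑ i, (g i (xhat k) - g i (x i k))‖ ^ 2 ≤ D k := by
      refine (havgnorm _).trans ?_
      simp only [hDdef]
      refine mul_le_mul_of_nonneg_left ?_ (inv_nonneg.2 hm.le)
      refine Finset.sum_le_sum fun i _ => ?_
      have e7 := hlip i (xhat k) (x i k)
      have e8 : ‖xhat k - x i k‖ = ‖x i k - xhat k‖ := norm_sub_rev _ _
      rw [e8] at e7
      nlinarith [norm_nonneg (g i (xhat k) - g i (x i k)), norm_nonneg (x i k - xhat k)]
    have e9 := hw2 k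
    linarith
  -- sync points: everyone equals the average
  have hsynceq : ∀ j : ℕ, (∃ n, j = t n) → ∀ i, x i j = xhat j := by
    intro j hj i
    match j with
    | 0 =>
      rw [hinit i, hxhat 0, Finset.sum_congr rfl fun i' _ => hinit i']
      exact (havg x0).symm
    | (k+1) =>
      have h1 := hrecC k hj
      rw [h1 i, hxhat (k+1), Finset.sum_congr rfl fun i' _ => h1 i', havg]
  -- epoch structure
  have hepoch : ∀ k : ℕ, ∃ s : ℕ, (∃ n, s = t n) ∧ s ≤ k ∧ k - s ≤ H - 1 ∧
      ∀ j, s < j → j ≤ k → ¬ (∃ n, j = t n) := by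
    intro k
    have hP0 : t 0 ≤ k := by omega
    set n0 := Nat.findGreatest (fun n => t n ≤ k) k with hn0
    have hPn0 : t n0 ≤ k := by
      have h := Nat.findGreatest_spec (P := fun n => t n ≤ k) (Nat.zero_le k) hP0
      rw [← hn0] at h
      exact h
    have hmax : ∀ n, t n ≤ k → n ≤ n0 := by
      intro n hn
      by_contra hc
      push_neg at hc
      rw [hn0] at hc
      have hnk : n ≤ k := le_trans htmono.le_apply hn
      exact absurd hn (Nat.findGreatest_is_greatest (P := fun n => t n ≤ k) hc hnk)
    refine ⟨t n0, ⟨n0, rfl⟩, hPn0, ?_, ?_⟩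
    · have h1 : k < t (n0 + 1) := by
        by_contra hc
        push_neg at hc
        have := hmax (n0+1) hc
        omega
      have h2 := htH n0
      have h3 : t n0 < t (n0+1) := htmono (by omega)
      omega
    · rintro j hj1 hj2 ⟨n, hn⟩
      have h5 : n ≤ n0 := hmax n (hn ▸ hj2)
      have h6 : t n ≤ t n0 := htmono.monotone h5
      omega
  -- drift bound
  have hdrift : ∀ k, D k ≤ l^2 * ((H:ℝ)-1) * ∑ j ∈ Ico (k - (H-1)) k, (6 * S j + 3 * σ^2) := by
    intro k
    obtain ⟨s, hsync, hsk, hgap, hnos⟩ := hepoch k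
    have hef : ∀ i : Fin M,
        x i k - xhat k = -(l • ∑ j ∈ Ico s k, (g i (x i j) - w j)) := by
      intro i
      have main : ∀ k', s ≤ k' → k' ≤ k →
          x i k' - xhat k' = -(l • ∑ j ∈ Ico s k', (g i (x i j) - w j)) := by
        intro k' hk1
        induction k', hk1 using Nat.le_induction with
        | base =>
          intro _
          rw [Finset.Ico_self, Finset.sum_empty, smul_zero, neg_zero,
            hsynceq s hsync i, sub_self]
        | succ k' hk' ih =>
          intro hk2
          have ihh := ih (by omega)
          have hnotsync : ¬ (∃ n, k' + 1 = t n) := hnos (k'+1) (by omega) (by omega)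
          have hx1 : x i (k'+1) = x i k' - l • g i (x i k') := hrecN k' hnotsync i
          have hxh := hstep' k'
          have e1 : x i (k'+1) - xhat (k'+1)
              = (x i k' - xhat k') - l • (g i (x i k') - w k') := by
            rw [hx1, hxh, smul_sub]
            abel
          rw [e1, ihh, Finset.sum_Ico_succ_top hk', smul_add]
          abel
      exact main k hsk le_rfl
    have hperi : ∀ i : Fin M, ‖x i k - xhat k‖^2
        ≤ l^2 * ((k - s : ℕ):ℝ) * ∑ j ∈ Ico s k, ‖g i (x i j) - w j‖^2 := by
      intro i
      rw [hef i, norm_neg, norm_smul, Real.norm_eq_abs, mul_pow, sq_abs]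
      have h2 := jensen_norm (Ico s k) (fun j => g i (x i j) - w j)
      rw [Nat.card_Ico] at h2
      calc l^2 * ‖∑ j ∈ Ico s k, (g i (x i j) - w j)‖^2
          ≤ l^2 * (((k-s:ℕ):ℝ) * ∑ j ∈ Ico s k, ‖g i (x i j) - w j‖^2) :=
            mul_le_mul_of_nonneg_left h2 (sq_nonneg l)
        _ = _ := by ring
    have hDk : D k ≤ l^2 * (((k - s : ℕ)):ℝ)
        * ∑ j ∈ Ico s k, ((M:ℝ)⁻¹ * ∑ i, ‖g i (x i j) - w j‖^2) := by
      simp only [hDdef]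
      calc (M:ℝ)⁻¹ * ∑ i, ‖x i k - xhat k‖^2
          ≤ (M:ℝ)⁻¹ * ∑ i : Fin M, (l^2*((k-s:ℕ):ℝ) * ∑ j ∈ Ico s k, ‖g i (x i j) - w j‖^2) :=
            mul_le_mul_of_nonneg_left (Finset.sum_le_sum fun i _ => hperi i) (inv_nonneg.2 hm.le)
        _ = l^2*((k-s:ℕ):ℝ) * ∑ j ∈ Ico s k, ((M:ℝ)⁻¹ * ∑ i, ‖g i (x i j) - w j‖^2) := by
            rw [← Finset.mul_sum, ← Finset.mul_sum, Finset.sum_comm]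
            ring
    have hnsum : ∑ j ∈ Ico s k, ((M:ℝ)⁻¹ * ∑ i, ‖g i (x i j) - w j‖^2)
        ≤ ∑ j ∈ Ico s k, (6 * S j + 3 * σ^2) :=
      Finset.sum_le_sum fun j _ => hnoise j
    have hks : ((k - s:ℕ):ℝ) ≤ (H:ℝ) - 1 := by
      rw [← hhcast]
      exact_mod_cast hgap
    have hsubs : Ico s k ⊆ Ico (k - (H-1)) k := Finset.Ico_subset_Ico (by omega) le_rfl
    have hsum3 : ∑ j ∈ Ico s k, (6*S j + 3*σ^2) ≤ ∑ j ∈ Ico (k-(H-1)) k, (6*S j + 3*σ^2) :=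
      Finset.sum_le_sum_of_subset_of_nonneg hsubs fun j _ _ => by nlinarith [hS0 j, sq_nonneg σ]
    have hnonneg1 : (0:ℝ) ≤ ∑ j ∈ Ico s k, ((M:ℝ)⁻¹ * ∑ i, ‖g i (x i j) - w j‖^2) :=
      Finset.sum_nonneg fun j _ => mul_nonneg (inv_nonneg.2 hm.le)
        (Finset.sum_nonneg fun i _ => sq_nonneg _)
    have hnonneg2 : (0:ℝ) ≤ ∑ j ∈ Ico s k, (6*S j + 3*σ^2) :=
      Finset.sum_nonneg fun j _ => by nlinarith [hS0 j, sq_nonneg σ]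
    calc D k ≤ l^2 * (((k - s : ℕ)):ℝ) * ∑ j ∈ Ico s k, ((M:ℝ)⁻¹ * ∑ i, ‖g i (x i j) - w j‖^2) := hDk
      _ ≤ l^2 * (((k - s : ℕ)):ℝ) * ∑ j ∈ Ico s k, (6*S j + 3*σ^2) := by
          apply mul_le_mul_of_nonneg_left hnsum
          positivity
      _ ≤ l^2 * ((H:ℝ)-1) * ∑ j ∈ Ico s k, (6*S j + 3*σ^2) := by
          apply mul_le_mul_of_nonneg_right _ hnonneg2
          nlinarith [sq_nonneg l, hks]
      _ ≤ l^2 * ((H:ℝ)-1) * ∑ j ∈ Ico (k-(H-1)) k, (6*S j + 3*σ^2) := by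
          apply mul_le_mul_of_nonneg_left hsum3
          positivity
  -- telescoping
  have hxhat0eq : xhat 0 = x0 := by
    rw [hxhat 0, Finset.sum_congr rfl fun i' _ => hinit i']
    exact havg x0
  have htel : ∑ k ∈ range N, ((11/8)*l*S k - 2*l*D k) ≤ ‖x0 - xs‖^2 := by
    calc ∑ k ∈ range N, ((11/8)*l*S k - 2*l*D k)
        ≤ ∑ k ∈ range N, (‖xhat k - xs‖^2 - ‖xhat (k+1) - xs‖^2) :=
          Finset.sum_le_sum fun k _ => by linarith [hdesc k]
      _ = ‖xhat 0 - xs‖^2 - ‖xhat N - xs‖^2 :=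
          Finset.sum_range_sub' (fun k => ‖xhat k - xs‖^2) N
      _ ≤ ‖xhat 0 - xs‖^2 := by linarith [sq_nonneg ‖xhat N - xs‖]
      _ = ‖x0 - xs‖^2 := by rw [hxhat0eq]
  have hsumS : (11/8)*l*(∑ k ∈ range N, S k) ≤ ‖x0 - xs‖^2 + 2*l*(∑ k ∈ range N, D k) := by
    have e1 : ∑ k ∈ range N, ((11/8)*l*S k - 2*l*D k)
        = (11/8)*l*(∑ k ∈ range N, S k) - 2*l*(∑ k ∈ range N, D k) := by
      rw [Finset.sum_sub_distrib, Finset.mul_sum, Finset.mul_sum]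
    rw [e1] at htel
    linarith
  have hsumD : (∑ k ∈ range N, D k)
      ≤ (l*((H:ℝ)-1))^2 * (6*(∑ k ∈ range N, S k) + 3*σ^2*N) := by
    have h1 : ∑ k ∈ range N, D k
        ≤ ∑ k ∈ range N, (l^2*((H:ℝ)-1) * ∑ j ∈ Ico (k-(H-1)) k, (6*S j + 3*σ^2)) :=
      Finset.sum_le_sum fun k _ => hdrift k
    have h2 : ∑ k ∈ range N, (l^2*((H:ℝ)-1) * ∑ j ∈ Ico (k-(H-1)) k, (6*S j+3*σ^2))
        = l^2*((H:ℝ)-1) * ∑ k ∈ range N, ∑ j ∈ Ico (k-(H-1)) k, (6*S j+3*σ^2) :=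
      (Finset.mul_sum _ _ _).symm
    have h3 := double_count (fun j => 6*S j + 3*σ^2)
      (fun j => by show (0:ℝ) ≤ 6*S j + 3*σ^2; nlinarith [hS0 j, sq_nonneg σ]) N (H-1)
    have h4 : ∑ j ∈ range N, (6*S j + 3*σ^2) = 6*(∑ k ∈ range N, S k) + 3*σ^2*N := by
      rw [Finset.sum_add_distrib, Finset.sum_const, card_range, ← Finset.mul_sum, nsmul_eq_mul]
      ring
    rw [h4, hhcast] at h3
    have h5 := mul_le_mul_of_nonneg_left h3
      (by positivity : (0:ℝ) ≤ l^2*((H:ℝ)-1))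
    have h6 : l^2*((H:ℝ)-1) * (((H:ℝ)-1) * (6*(∑ k ∈ range N, S k) + 3*σ^2*N))
        = (l*((H:ℝ)-1))^2 * (6*(∑ k ∈ range N, S k) + 3*σ^2*N) := by ring
    rw [h6] at h5
    calc (∑ k ∈ range N, D k)
        ≤ ∑ k ∈ range N, (l^2*((H:ℝ)-1) * ∑ j ∈ Ico (k-(H-1)) k, (6*S j + 3*σ^2)) := h1
      _ = l^2*((H:ℝ)-1) * ∑ k ∈ range N, ∑ j ∈ Ico (k-(H-1)) k, (6*S j+3*σ^2) := h2
      _ ≤ (l*((H:ℝ)-1))^2 * (6*(∑ k ∈ range N, S k) + 3*σ^2*N) := h5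
  -- bound on the initial distance from the condition on N
  have hNpos : (0:ℝ) < (N:ℝ) := by exact_mod_cast hN
  have hV0b : ‖x0 - xs‖^2 ≤ (ε/6)*(l*N) := by
    have hV00 : (0:ℝ) ≤ ‖x0 - xs‖^2 := sq_nonneg _
    rcases le_total (1 / (8 * ((H:ℝ) - 1)))
        (Real.sqrt ε / (6 * Real.sqrt 2 * ((H:ℝ) - 1) * σ)) with hc | hc
    · have hleq : l = 1/(8*((H:ℝ)-1)) := hl.trans (min_eq_left hc)
      have hmax2 : (2:ℝ) ≤ max 2 (3*σ/Real.sqrt (2*ε)) := le_max_left _ _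
      have hA1 : 24 * ‖x0 - xs‖^2 / ε * 2 ≤ (N:ℝ)/((H:ℝ)-1) := by
        refine le_trans ?_ hcond
        apply mul_le_mul_of_nonneg_left hmax2
        positivity
      have hA2 : (48 * ‖x0 - xs‖^2) / ε ≤ (N:ℝ)/((H:ℝ)-1) := by
        have e : 24 * ‖x0 - xs‖^2 / ε * 2 = (48 * ‖x0 - xs‖^2) / ε := by ring
        linarith [e ▸ hA1]
      rw [div_le_div_iff₀ hε hhpos] at hA2
      have hne : ((H:ℝ)-1) ≠ 0 := ne_of_gt hhpos
      rw [hleq, show (ε/6) * (1/(8*((H:ℝ)-1)) * (N:ℝ)) = ε*(N:ℝ)/(48*((H:ℝ)-1)) from by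
        field_simp
        ring, le_div_iff₀ (by positivity)]
      nlinarith [hA2]
    · have hleq : l = Real.sqrt ε / (6 * Real.sqrt 2 * ((H:ℝ) - 1) * σ) :=
        hl.trans (min_eq_right hc)
      have hmax3 : 3*σ/Real.sqrt (2*ε) ≤ max 2 (3*σ/Real.sqrt (2*ε)) := le_max_right _ _
      have hA1 : 24 * ‖x0 - xs‖^2 / ε * (3*σ/Real.sqrt (2*ε)) ≤ (N:ℝ)/((H:ℝ)-1) := by
        refine le_trans ?_ hcond
        apply mul_le_mul_of_nonneg_left hmax3
        positivity
      have hsplit : Real.sqrt (2*ε) = Real.sqrt 2 * Real.sqrt ε := Real.sqrt_mul (by norm_num) ε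
      have hA2 : (72 * ‖x0 - xs‖^2 * σ) / (ε*(Real.sqrt 2*Real.sqrt ε)) ≤ (N:ℝ)/((H:ℝ)-1) := by
        have e : 24 * ‖x0 - xs‖^2 / ε * (3*σ/(Real.sqrt 2*Real.sqrt ε))
            = (72 * ‖x0 - xs‖^2 * σ) / (ε*(Real.sqrt 2*Real.sqrt ε)) := by ring
        rw [hsplit, e] at hA1
        exact hA1
      rw [div_le_div_iff₀ (by positivity) hhpos] at hA2
      have h4' : Real.sqrt 2 * Real.sqrt 2 = 2 := Real.mul_self_sqrt (by norm_num)
      have key := mul_le_mul_of_nonneg_right hA2 hsq2.le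
      have key2 : 72 * ‖x0 - xs‖^2 * σ * ((H:ℝ)-1) * Real.sqrt 2
          ≤ (N:ℝ) * ε * Real.sqrt ε * 2 := by
        calc 72 * ‖x0 - xs‖^2 * σ * ((H:ℝ)-1) * Real.sqrt 2
            ≤ (N:ℝ) * (ε*(Real.sqrt 2*Real.sqrt ε)) * Real.sqrt 2 := key
          _ = (N:ℝ) * ε * Real.sqrt ε * (Real.sqrt 2 * Real.sqrt 2) := by ring
          _ = (N:ℝ) * ε * Real.sqrt ε * 2 := by rw [h4']
      have hne : ((H:ℝ)-1) ≠ 0 := ne_of_gt hhpos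
      rw [hleq, show (ε/6) * (Real.sqrt ε / (6 * Real.sqrt 2 * ((H:ℝ) - 1) * σ) * (N:ℝ))
          = ε*Real.sqrt ε*(N:ℝ)/(36*Real.sqrt 2*((H:ℝ)-1)*σ) from by
        field_simp
        ring, le_div_iff₀ (by positivity)]
      linarith [key2]
  -- final arithmetic
  have hsumF : ∑ k ∈ range N, ‖xhat k - (M:ℝ)⁻¹ • ∑ i, A i (xhat k)‖ ^ 2
      ≤ 2*(∑ k ∈ range N, S k) + 2*(∑ k ∈ range N, D k) := by
    calc ∑ k ∈ range N, ‖xhat k - (M:ℝ)⁻¹ • ∑ i, A i (xhat k)‖ ^ 2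
        ≤ ∑ k ∈ range N, (2 * S k + 2 * D k) := Finset.sum_le_sum fun k _ => hFb k
      _ = 2*(∑ k ∈ range N, S k) + 2*(∑ k ∈ range N, D k) := by
          rw [Finset.sum_add_distrib, Finset.mul_sum, Finset.mul_sum]
  set Pv := ∑ k ∈ range N, S k with hPvdef
  set Qv := ∑ k ∈ range N, D k with hQvdef
  set V0v := ‖x0 - xs‖^2 with hV0vdef
  set qv := (l*((H:ℝ)-1))^2 with hqvdef
  set lv := l*(N:ℝ) with hlvdef
  have hP0' : 0 ≤ Pv := Finset.sum_nonneg fun k _ => hS0 k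
  have hQ0' : 0 ≤ Qv := Finset.sum_nonneg fun k _ => hD0 k
  clear_value Pv Qv V0v qv lv
  rw [inv_mul_le_iff₀ hNpos]
  refine le_trans hsumF ?_
  clear hsumF hFb hdesc hnoise hsynceq hepoch hdrift htel hσ2 hσ hcond hco hlip hstep
    hstep' hgbarΔ hw2 havgnorm havg hA_sum hsumgs hA hg hxs hinit hrecC hrecN hxhat
    hxhat0eq hSdef hDdef hwdef hl hS0 hD0
  have hqP : qv * Pv ≤ (1/64) * Pv := mul_le_mul_of_nonneg_right hq64 hP0'
  have hqσN : qv * σ^2 * (N:ℝ) ≤ (ε/72) * (N:ℝ) := mul_le_mul_of_nonneg_right hqσ hNpos.le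
  have hsumD' : Qv ≤ 6 * (qv * Pv) + 3 * (qv * σ^2 * (N:ℝ)) := by
    refine hsumD.trans (le_of_eq ?_)
    ring
  have hQb : Qv ≤ (3/32)*Pv + (1/24)*ε*(N:ℝ) := by linarith
  have hl2Q : 2*l*Qv ≤ 2*l*((3/32)*Pv + (1/24)*ε*(N:ℝ)) :=
    mul_le_mul_of_nonneg_left hQb (by linarith)
  have hexpand : 2*l*((3/32)*Pv + (1/24)*ε*(N:ℝ)) = (3/16)*(l*Pv) + (1/12)*ε*lv := by
    rw [hlvdef]
    ring
  rw [hexpand] at hl2Q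
  have hlP : l * Pv ≤ l * ((4/19)*ε*(N:ℝ)) := by
    have hrhs : l * ((4/19)*ε*(N:ℝ)) = (4/19)*ε*lv := by
      rw [hlvdef]
      ring
    rw [hrhs]
    linarith [hsumS, hl2Q, hV0b]
  have hPb : Pv ≤ (4/19)*ε*(N:ℝ) := le_of_mul_le_mul_left hlP hlpos
  have hεN : 0 < ε * (N:ℝ) := mul_pos hε hNpos
  linarith [hPb, hQb, hεN]
end
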